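/- arXiv:2510.19703 — 12 statements merged into one kernel-verified Lean document; each statement's English description precedes it below -/
import Mathlib

section
/- If B is a positive definite symmetrised Cartan matrix of order l, then the graph of B is acyclic (contains no cycle; equivalently, it is a forest). -/
/-- A symmetrised Cartan matrix: real symmetric, diagonal entries 2,
non-positive off-diagonal entries whose squares lie in {0, 1, 2, 3}. -/
def IsSymCartan {l : ℕ} (B : Matrix (Fin l) (Fin l) ℝ) : Prop :=
  B.IsSymm ∧ (∀ i, B i i = 2) ∧ (∀ i j, i ≠ j → B i j ≤ 0) ∧
    ∀ i j, i ≠ j →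
      (B i j) ^ 2 = 0 ∨ (B i j) ^ 2 = 1 ∨ (B i j) ^ 2 = 2 ∨ (B i j) ^ 2 = 3

/-- the graph of a positive definite symmetrised Cartan matrix
is acyclic. -/
theorem stmt2 {l : ℕ} (B : Matrix (Fin l) (Fin l) ℝ)
    (hB : IsSymCartan B) (hpd : B.PosDef) :
    (SimpleGraph.fromRel fun i j : Fin l => B i j ≠ 0).IsAcyclic := by
  obtain ⟨hsymm, hdiag, hnonpos, hsq⟩ := hB
  set G := SimpleGraph.fromRel fun i j : Fin l => B i j ≠ 0 with hG
  have hBsym : ∀ i j, B j i = B i j := fun i j => congrFun (congrFun hsymm i) j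
  have hedge : ∀ i j : Fin l, G.Adj i j → B i j ≤ -1 := by
    intro i j hij
    rw [hG, SimpleGraph.fromRel_adj] at hij
    obtain ⟨hne, hor⟩ := hij
    have hne0 : B i j ≠ 0 := by
      rcases hor with h | h
      · exact h
      · rw [hBsym] at h; exact h
    have h1 : 1 ≤ (B i j) ^ 2 := by
      rcases hsq i j hne with h | h | h | h
      · exact absurd (pow_eq_zero_iff (n := 2) (by norm_num) |>.mp h) hne0
      all_goals linarith [h]
    nlinarith [hnonpos i j hne]
  intro v p hp
  -- the set of vertices of the cycle
  set S : Finset (Fin l) := p.support.tail.toFinset with hS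
  have hsup : ∀ a, a ∈ p.support → a ∈ S := by
    intro a ha
    cases p with
    | nil => exact absurd rfl hp.ne_nil
    | cons h q =>
        rw [SimpleGraph.Walk.support_cons] at ha
        rw [hS, SimpleGraph.Walk.support_cons]
        simp only [List.tail_cons, List.mem_toFinset]
        rcases List.mem_cons.mp ha with rfl | ha
        · exact q.end_mem_support
        · exact ha
  have hScard : S.card = p.length := by
    rw [hS, List.toFinset_card_of_nodup hp.support_nodup]
    simp [List.length_tail, SimpleGraph.Walk.length_support]
  -- the indicator vector
  set x : Fin l → ℝ := fun i => if i ∈ S then 1 else 0 with hx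
  have hxne : x ≠ 0 := by
    have hv : v ∈ S := hsup v p.start_mem_support
    intro h
    have := congrFun h v
    simp [hx, hv] at this
  have hpos : 0 < dotProduct (star x) (B.mulVec x) := hpd.dotProduct_mulVec_pos hxne
  rw [show star x = x from funext fun i => by simp [hx]] at hpos
  have hquad : dotProduct x (B.mulVec x) = ∑ a ∈ S, ∑ b ∈ S, B a b := by
    simp only [dotProduct, Matrix.mulVec, hx, ite_mul, one_mul, zero_mul,
      mul_ite, mul_one, mul_zero]
    rw [Finset.sum_ite_mem, Finset.univ_inter]
    exact Finset.sum_congr rfl fun a _ => by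
      rw [Finset.sum_ite_mem, Finset.univ_inter]
  -- split into diagonal and off-diagonal parts
  have hsplit : ∑ a ∈ S, ∑ b ∈ S, B a b
      = ∑ q ∈ S.diag, B q.1 q.2 + ∑ q ∈ S.offDiag, B q.1 q.2 := by
    rw [← Finset.sum_union (Finset.disjoint_diag_offDiag S), Finset.diag_union_offDiag,
      Finset.sum_product]
  have hdiagsum : ∑ q ∈ S.diag, B q.1 q.2 = 2 * p.length := by
    rw [Finset.sum_diag]
    simp only [hdiag]
    rw [Finset.sum_const, hScard, nsmul_eq_mul]
    ring
  -- the ordered edge pairs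
  set T : Finset (Fin l × Fin l) :=
    (p.darts.map fun d => d.toProd).toFinset ∪
    (p.darts.map fun d => d.toProd.swap).toFinset with hT
  have hdartsnd : p.darts.Nodup := by
    have := hp.edges_nodup
    exact this.of_map SimpleGraph.Dart.edge
  have hinj : ∀ d ∈ p.darts, ∀ d' ∈ p.darts,
      SimpleGraph.Dart.edge d = SimpleGraph.Dart.edge d' → d = d' :=
    List.inj_on_of_nodup_map hp.edges_nodup
  have htpinj : Function.Injective fun d : G.Dart => d.toProd :=
    fun d d' h => SimpleGraph.Dart.ext _ _ h
  have hnd1 : (p.darts.map fun d => d.toProd).Nodup := hdartsnd.map htpinj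
  have hnd2 : (p.darts.map fun d => d.toProd.swap).Nodup :=
    hdartsnd.map (Prod.swap_injective.comp htpinj)
  have hdisj : Disjoint (p.darts.map fun d => d.toProd).toFinset
      (p.darts.map fun d => d.toProd.swap).toFinset := by
    rw [Finset.disjoint_left]
    intro pr h1 h2
    simp only [List.mem_toFinset, List.mem_map] at h1 h2
    obtain ⟨d, hd, rfl⟩ := h1
    obtain ⟨d', hd', hdd'⟩ := h2
    have hedgeq : SimpleGraph.Dart.edge d' = SimpleGraph.Dart.edge d := by
      rw [SimpleGraph.Dart.edge, SimpleGraph.Dart.edge, ← hdd']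
      exact Sym2.mk_prod_swap_eq.symm
    have : d' = d := hinj d' hd' d hd hedgeq
    subst this
    have : d'.toProd.1 = d'.toProd.2 := by
      have := congrArg Prod.fst hdd'
      simpa using this.symm
    exact d'.adj.ne this
  have hTcard : T.card = 2 * p.length := by
    rw [hT, Finset.card_union_of_disjoint hdisj,
      List.toFinset_card_of_nodup hnd1, List.toFinset_card_of_nodup hnd2]
    simp [SimpleGraph.Walk.length_darts]
    ring
  have hTsub : T ⊆ S.offDiag := by
    intro pr hpr
    rw [hT, Finset.mem_union] at hpr
    have key : ∀ d ∈ p.darts, d.toProd ∈ S.offDiag := by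
      intro d hd
      rw [Finset.mem_offDiag]
      exact ⟨hsup _ (SimpleGraph.Walk.dart_fst_mem_support_of_mem_darts p hd),
        hsup _ (SimpleGraph.Walk.dart_snd_mem_support_of_mem_darts p hd), d.adj.ne⟩
    rcases hpr with h | h <;> simp only [List.mem_toFinset, List.mem_map] at h <;>
      obtain ⟨d, hd, rfl⟩ := h
    · exact key d hd
    · have := key d hd
      rw [Finset.mem_offDiag] at this ⊢
      exact ⟨this.2.1, this.1, fun hc => this.2.2 hc.symm⟩
  have hTle : ∀ pr ∈ T, B pr.1 pr.2 ≤ -1 := by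
    intro pr hpr
    rw [hT, Finset.mem_union] at hpr
    rcases hpr with h | h <;> simp only [List.mem_toFinset, List.mem_map] at h <;>
      obtain ⟨d, hd, rfl⟩ := h
    · exact hedge _ _ d.adj
    · exact hedge _ _ d.adj.symm
  have hoffle : ∑ q ∈ S.offDiag, B q.1 q.2 ≤ -(2 * p.length) := by
    have h1 : ∑ q ∈ S.offDiag \ T, B q.1 q.2 + ∑ q ∈ T, B q.1 q.2
        = ∑ q ∈ S.offDiag, B q.1 q.2 := Finset.sum_sdiff hTsub
    have h2 : ∑ q ∈ S.offDiag \ T, B q.1 q.2 ≤ 0 := by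
      apply Finset.sum_nonpos
      intro q hq
      have hq' := Finset.mem_sdiff.mp hq |>.1
      rw [Finset.mem_offDiag] at hq'
      exact hnonpos _ _ hq'.2.2
    have h3 : ∑ q ∈ T, B q.1 q.2 ≤ T.card • (-1 : ℝ) :=
      Finset.sum_le_card_nsmul T _ (-1) hTle
    rw [hTcard] at h3
    simp only [nsmul_eq_mul] at h3
    push_cast at h3 ⊢
    linarith
  rw [hquad, hsplit, hdiagsum] at hpos
  have hlen : (3 : ℝ) ≤ p.length := by exact_mod_cast hp.three_le_length
  linarith
end

section
/- Let B be a symmetrised Cartan matrix of order l whose graph is acyclic. Then there exist an integer Cartan matrix A of order l and positive real numbers c_1, …, c_l such that B i j = c_i * A i j / c_j for all i, j. Moreover, for each unordered pair {p, q} with B p q ≠ 0 one may prescribe arbitrarily which of the two entries A p q, A q p equals −1; the other then equals −(B p q)^2. -/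
open SimpleGraph

section WalkWeight

variable {V : Type*} {G : SimpleGraph V} (ρ : V → V → ℝ)

/-- Multiplicative weight of a walk. -/
noncomputable def wgt {u v : V} (w : G.Walk u v) : ℝ :=
  (w.darts.map fun d => ρ d.toProd.1 d.toProd.2).prod

@[simp] lemma wgt_nil {u : V} : wgt ρ (Walk.nil : G.Walk u u) = 1 := by
  simp [wgt]

@[simp] lemma wgt_cons {u x v : V} (h : G.Adj u x) (w : G.Walk x v) :
    wgt ρ (Walk.cons h w) = ρ u x * wgt ρ w := by
  simp [wgt]

@[simp] lemma wgt_append {u v w' : V} (w₁ : G.Walk u v) (w₂ : G.Walk v w') :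
    wgt ρ (w₁.append w₂) = wgt ρ w₁ * wgt ρ w₂ := by
  simp [wgt, Walk.darts_append]

@[simp] lemma wgt_copy {u v u' v' : V} (w : G.Walk u v) (hu : u = u') (hv : v = v') :
    wgt ρ (w.copy hu hv) = wgt ρ w := by
  simp [wgt, Walk.darts_copy]

lemma wgt_pos (hρ : ∀ a b, G.Adj a b → 0 < ρ a b) {u v : V} (w : G.Walk u v) :
    0 < wgt ρ w := by
  induction w with
  | nil => simp
  | cons h w ih => simpa using mul_pos (hρ _ _ h) ih

lemma wgt_eq_path [DecidableEq V] (hG : G.IsAcyclic)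
    (hρ : ∀ a b, G.Adj a b → ρ a b * ρ b a = 1) :
    ∀ {u v : V} (w : G.Walk u v) (p : G.Path u v), wgt ρ w = wgt ρ p.1 := by
  intro u v w
  induction w with
  | nil =>
    intro p
    have : p = Path.nil := hG.path_unique p Path.nil
    simp [this, Path.nil]
  | @cons u x v h w ih =>
    intro p
    have hxv : G.Reachable x v := ⟨w⟩
    set p₂ : G.Path x v := w.toPath with hp₂
    have hw : wgt ρ (Walk.cons h w) = ρ u x * wgt ρ p₂.1 := by
      rw [wgt_cons, ih p₂]
    rw [hw]
    by_cases hu : u ∈ p₂.1.support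
    · -- path x→v passes through u
      have htake : (p₂.1.takeUntil u hu).IsPath := p₂.2.takeUntil hu
      have hedge : (Walk.cons h.symm (Walk.nil : G.Walk u u)).IsPath := by
        refine Walk.IsPath.nil.cons ?_
        simp only [Walk.support_nil, List.mem_singleton]; exact h.ne'
      have := hG.path_unique ⟨p₂.1.takeUntil u hu, htake⟩ ⟨Walk.cons h.symm Walk.nil, hedge⟩
      have heq : p₂.1.takeUntil u hu = Walk.cons h.symm Walk.nil := congrArg Subtype.val this
      have hdrop : (p₂.1.dropUntil u hu).IsPath := p₂.2.dropUntil hu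
      have hpd : (⟨p₂.1.dropUntil u hu, hdrop⟩ : G.Path u v) = p :=
        hG.path_unique _ _
      have hval : p₂.1.dropUntil u hu = p.1 := congrArg Subtype.val hpd
      have hspec := p₂.1.take_spec hu
      have : wgt ρ p₂.1 = ρ x u * wgt ρ p.1 := by
        rw [← hspec, wgt_append, heq, hval, wgt_cons, wgt_nil, mul_one]
      rw [this, ← mul_assoc, hρ u x h, one_mul]
    · have hpath : (Walk.cons h p₂.1).IsPath := p₂.2.cons hu
      have := hG.path_unique p ⟨Walk.cons h p₂.1, hpath⟩
      have hval : p.1 = Walk.cons h p₂.1 := congrArg Subtype.val this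
      rw [hval, wgt_cons]

lemma wgt_eq_wgt [DecidableEq V] (hG : G.IsAcyclic)
    (hρ : ∀ a b, G.Adj a b → ρ a b * ρ b a = 1)
    {u v : V} (w₁ w₂ : G.Walk u v) : wgt ρ w₁ = wgt ρ w₂ := by
  rw [wgt_eq_path ρ hG hρ w₁ w₁.toPath, wgt_eq_path ρ hG hρ w₂ w₁.toPath]

end WalkWeight

lemma round_sq_facts {x : ℝ} (h : x ^ 2 = 1 ∨ x ^ 2 = 2 ∨ x ^ 2 = 3) :
    ((round (x ^ 2) : ℤ) : ℝ) = x ^ 2 ∧ 1 ≤ round (x ^ 2) ∧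
      (round (x ^ 2) = 1 ∨ round (x ^ 2) = 2 ∨ round (x ^ 2) = 3) := by
  rcases h with h | h | h <;> rw [h] <;> norm_num

/-- An (integer) Cartan matrix. -/
def IsCartan {l : ℕ} (A : Matrix (Fin l) (Fin l) ℤ) : Prop :=
  (∀ i, A i i = 2) ∧ (∀ i j, i ≠ j → A i j ≤ 0) ∧
    (∀ i j, i ≠ j →
      A i j * A j i = 0 ∨ A i j * A j i = 1 ∨ A i j * A j i = 2 ∨ A i j * A j i = 3) ∧
    ∀ i j, i ≠ j → (A i j = 0 ↔ A j i = 0)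

/-- a symmetrised Cartan matrix with acyclic graph arises from an
integer Cartan matrix via positive scaling factors, and for each unordered pair
`{p, q}` with `B p q ≠ 0` one may prescribe (via an arbitrary orientation `o`)
which of `A p q`, `A q p` equals `-1`; the other then equals `-(B p q)^2`. -/
theorem stmt3 {l : ℕ} (B : Matrix (Fin l) (Fin l) ℝ)
    (hB : IsSymCartan B)
    (hacyclic : (SimpleGraph.fromRel fun i j : Fin l => B i j ≠ 0).IsAcyclic)
    (o : Fin l → Fin l → Prop)
    (ho : ∀ p q, p ≠ q → B p q ≠ 0 → (o p q ↔ ¬ o q p)) :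
    ∃ (A : Matrix (Fin l) (Fin l) ℤ) (c : Fin l → ℝ),
      IsCartan A ∧ (∀ i, 0 < c i) ∧
      (∀ i j, B i j = c i * (A i j : ℝ) / c j) ∧
      ∀ p q, p ≠ q → B p q ≠ 0 → o p q →
        A p q = -1 ∧ (A q p : ℝ) = -(B p q) ^ 2 := by
  classical
  obtain ⟨hsymm, hdiag, hle, hsq⟩ := hB
  have hBsymm : ∀ i j, B j i = B i j := fun i j => congrFun (congrFun hsymm i) j
  set G : SimpleGraph (Fin l) := SimpleGraph.fromRel fun i j : Fin l => B i j ≠ 0 with hGdef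
  have hadj : ∀ i j, G.Adj i j ↔ i ≠ j ∧ B i j ≠ 0 := by
    intro i j
    rw [hGdef, SimpleGraph.fromRel_adj]
    constructor
    · rintro ⟨h1, h2 | h2⟩
      · exact ⟨h1, h2⟩
      · exact ⟨h1, by rw [← hBsymm]; exact h2⟩
    · rintro ⟨h1, h2⟩; exact ⟨h1, Or.inl h2⟩
  set ρ : Fin l → Fin l → ℝ := fun i j => if o i j then -B i j else (-B i j)⁻¹ with hρdef
  have hadjB : ∀ a b, G.Adj a b → a ≠ b ∧ B a b ≠ 0 := fun a b h => (hadj a b).1 h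
  have hρ1 : ∀ a b, G.Adj a b → ρ a b * ρ b a = 1 := by
    intro a b hab
    obtain ⟨hne, hBab⟩ := hadjB a b hab
    have hBba : B b a ≠ 0 := by rw [hBsymm]; exact hBab
    have hoab := ho a b hne hBab
    have hnB : -B a b ≠ 0 := neg_ne_zero.mpr hBab
    by_cases h : o a b
    · have h' : ¬ o b a := hoab.1 h
      simp only [hρdef, if_pos h, if_neg h', hBsymm a b]
      exact mul_inv_cancel₀ hnB
    · have h' : o b a := by
        by_contra hc; exact h (hoab.2 hc)
      simp only [hρdef, if_neg h, if_pos h', hBsymm a b]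
      exact inv_mul_cancel₀ hnB
  have hρpos : ∀ a b, G.Adj a b → 0 < ρ a b := by
    intro a b hab
    obtain ⟨hne, hBab⟩ := hadjB a b hab
    have : 0 < -B a b := by
      have := hle a b hne
      cases lt_or_eq_of_le this with
      | inl h => linarith
      | inr h => exact absurd h hBab
    simp only [hρdef]
    split
    · exact this
    · exact inv_pos.mpr this
  -- root of each connected component
  set root : Fin l → Fin l := fun i => (G.connectedComponentMk i).out with hrootdef
  have hreach : ∀ i, G.Reachable i (root i) := by
    intro i
    exact ConnectedComponent.exact ((G.connectedComponentMk i).out_eq).symm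
  set c : Fin l → ℝ := fun i => wgt ρ (hreach i).some with hcdef
  have hc_eq : ∀ i (w : G.Walk i (root i)), c i = wgt ρ w := by
    intro i w
    exact wgt_eq_wgt ρ hacyclic hρ1 _ w
  have hcpos : ∀ i, 0 < c i := fun i => wgt_pos ρ hρpos _
  have hratio : ∀ i j, G.Adj i j → c i = ρ i j * c j := by
    intro i j hij
    have hroot : root j = root i := by
      simp only [hrootdef]
      rw [ConnectedComponent.sound hij.reachable]
    have := hc_eq i ((Walk.cons hij (hreach j).some).copy rfl hroot)
    rw [this, wgt_copy, wgt_cons]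
  -- the integer Cartan matrix
  set A : Matrix (Fin l) (Fin l) ℤ := Matrix.of fun i j =>
    if i = j then 2 else if B i j = 0 then 0 else if o i j then -1
      else -round (B i j ^ 2) with hAdef
  have hA : ∀ i j, A i j = if i = j then 2 else if B i j = 0 then 0 else if o i j then (-1 : ℤ)
      else -round (B i j ^ 2) := fun i j => rfl
  have hsq' : ∀ i j, i ≠ j → B i j ≠ 0 →
      (B i j ^ 2 = 1 ∨ B i j ^ 2 = 2 ∨ B i j ^ 2 = 3) := by
    intro i j hne hB0
    rcases hsq i j hne with h | h | h | h
    · exact ((hB0 ((pow_eq_zero_iff (by norm_num : (2:ℕ) ≠ 0)).mp h))).elim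
    · exact Or.inl h
    · exact Or.inr (Or.inl h)
    · exact Or.inr (Or.inr h)
  -- nonzero off-diagonal entries of A
  have hAne : ∀ i j, i ≠ j → B i j ≠ 0 → A i j ≠ 0 := by
    intro i j hne hB0
    rw [hA, if_neg hne, if_neg hB0]
    split
    · norm_num
    · obtain ⟨-, h1, -⟩ := round_sq_facts (hsq' i j hne hB0)
      omega
  refine ⟨A, c, ⟨?_, ?_, ?_, ?_⟩, hcpos, ?_, ?_⟩
  · intro i; rw [hA, if_pos rfl]
  · intro i j hne
    rw [hA, if_neg hne]
    split
    · exact le_refl 0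
    · split
      · norm_num
      · rename_i hB0 _
        obtain ⟨-, h1, -⟩ := round_sq_facts (hsq' i j hne hB0)
        omega
  · intro i j hne
    by_cases hB0 : B i j = 0
    · left
      rw [hA, if_neg hne, if_pos hB0, zero_mul]
    · have hB0' : B j i ≠ 0 := by rw [hBsymm]; exact hB0
      have hoij := ho i j hne hB0
      obtain ⟨hcast, h1, hmem⟩ := round_sq_facts (hsq' i j hne hB0)
      have hsqji : B j i ^ 2 = B i j ^ 2 := by rw [hBsymm]
      by_cases hoi : o i j
      · have hoj : ¬ o j i := hoij.1 hoi
        rw [hA i j, hA j i, if_neg hne, if_neg hne.symm, if_neg hB0, if_neg hB0',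
          if_pos hoi, if_neg hoj, hsqji]
        rcases hmem with h | h | h <;> rw [h] <;> norm_num
      · have hoj : o j i := by by_contra hc; exact hoi (hoij.2 hc)
        rw [hA i j, hA j i, if_neg hne, if_neg hne.symm, if_neg hB0, if_neg hB0',
          if_neg hoi, if_pos hoj]
        rcases hmem with h | h | h <;> rw [h] <;> norm_num
  · intro i j hne
    constructor
    · intro h
      by_contra hji
      have hB0 : B j i ≠ 0 := by
        intro hb
        exact hji (by rw [hA, if_neg hne.symm, if_pos hb])
      have hB0' : B i j ≠ 0 := by rw [← hBsymm]; exact hB0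
      exact hAne i j hne hB0' h
    · intro h
      by_contra hij
      have hB0 : B i j ≠ 0 := by
        intro hb
        exact hij (by rw [hA, if_neg hne, if_pos hb])
      have hB0' : B j i ≠ 0 := by rw [hBsymm]; exact hB0
      exact hAne j i hne.symm hB0' h
  · intro i j
    by_cases hne : i = j
    · subst hne
      rw [hA, if_pos rfl, hdiag]
      push_cast
      rw [mul_comm, mul_div_assoc, div_self (hcpos i).ne', mul_one]
    · by_cases hB0 : B i j = 0
      · rw [hA, if_neg hne, if_pos hB0, hB0]
        push_cast
        ring
      · have hGij : G.Adj i j := (hadj i j).2 ⟨hne, hB0⟩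
        have hrat := hratio i j hGij
        have hcj := (hcpos j).ne'
        by_cases hoi : o i j
        · rw [hA, if_neg hne, if_neg hB0, if_pos hoi, hrat]
          simp only [hρdef, if_pos hoi]
          push_cast
          field_simp
        · obtain ⟨hcast, -, -⟩ := round_sq_facts (hsq' i j hne hB0)
          rw [hA, if_neg hne, if_neg hB0, if_neg hoi, hrat]
          simp only [hρdef, if_neg hoi]
          push_cast [hcast]
          rw [eq_div_iff hcj, ← neg_inv]
          field_simp [hB0]
  · intro p q hpq hBpq hopq
    have hoqp : ¬ o q p := (ho p q hpq hBpq).1 hopq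
    have hBqp : B q p ≠ 0 := by rw [hBsymm]; exact hBpq
    constructor
    · rw [hA, if_neg hpq, if_neg hBpq, if_pos hopq]
    · obtain ⟨hcast, -, -⟩ := round_sq_facts (hsq' q p hpq.symm hBqp)
      rw [hA, if_neg hpq.symm, if_neg hBqp, if_neg hoqp]
      push_cast [hcast]
      rw [hBsymm]
end

section
/- If B is a positive definite symmetrised Cartan matrix of order l, then for every index i one has Σ_{j ≠ i} (B i j)^2 < 4 (equivalently, since each (B i j)^2 is an integer, Σ_{j ≠ i} (B i j)^2 ≤ 3). -/
/-- in a positive definite symmetrised Cartan matrix every vertex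
has degree (counting multiplicity) less than 4. -/
theorem stmt4 {l : ℕ} (B : Matrix (Fin l) (Fin l) ℝ)
    (hB : IsSymCartan B) (hpd : B.PosDef) :
    ∀ i : Fin l, ∑ j ∈ Finset.univ.erase i, (B i j) ^ 2 < 4 := by
  intro i
  obtain ⟨hsymm, hdiag, hneg, _⟩ := hB
  have hsym : ∀ j k, B j k = B k j := fun j k => by
    have := congrFun (congrFun hsymm k) j
    simpa [Matrix.transpose_apply] using this
  set S : ℝ := ∑ j ∈ Finset.univ.erase i, (B i j) ^ 2 with hSdef
  have hS0 : 0 ≤ S := Finset.sum_nonneg fun j _ => sq_nonneg _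
  rcases eq_or_lt_of_le hS0 with h0 | hpos
  · rw [← h0]; norm_num
  set v : Fin l → ℝ := fun j => if j = i then -S / 2 else B i j with hvdef
  have hvi : v i = -S / 2 := by simp [hvdef]
  have hvj : ∀ j, j ≠ i → v j = B i j := fun j hj => by simp [hvdef, hj]
  have hv : v ≠ 0 := by
    intro h
    have := congrFun h i
    rw [hvi] at this
    simp at this
    linarith
  have hQ := hpd.dotProduct_mulVec_pos hv
  have hstar : star v = v := by ext j; simp
  rw [hstar] at hQ
  have hQeq : dotProduct v (B.mulVec v) = ∑ j, ∑ k, v j * B j k * v k := by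
    simp [dotProduct, Matrix.mulVec, Finset.mul_sum, mul_assoc]
  rw [hQeq] at hQ
  have split : ∀ (g : Fin l → ℝ), ∑ j, g j = (∑ j ∈ Finset.univ.erase i, g j) + g i :=
    fun g => (Finset.sum_erase_add _ _ (Finset.mem_univ i)).symm
  have hexp : ∑ j, ∑ k, v j * B j k * v k =
      (∑ j ∈ Finset.univ.erase i, ∑ k ∈ Finset.univ.erase i, v j * B j k * v k)
      + (∑ j ∈ Finset.univ.erase i, v j * B j i * v i)
      + (∑ k ∈ Finset.univ.erase i, v i * B i k * v k)
      + v i * B i i * v i := by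
    rw [split (fun j => ∑ k, v j * B j k * v k)]
    rw [split (fun k => v i * B i k * v k)]
    rw [Finset.sum_congr rfl (fun j hj => split (fun k => v j * B j k * v k))]
    rw [Finset.sum_add_distrib]
    ring
  rw [hexp] at hQ
  -- evaluate cross terms
  have hcross1 : (∑ j ∈ Finset.univ.erase i, v j * B j i * v i) = -S / 2 * S := by
    have : (∑ j ∈ Finset.univ.erase i, v j * B j i * v i)
        = -S / 2 * ∑ j ∈ Finset.univ.erase i, (B i j) ^ 2 := by
      rw [Finset.mul_sum]
      refine Finset.sum_congr rfl fun j hj => ?_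
      have hj' : j ≠ i := Finset.ne_of_mem_erase hj
      rw [hvj j hj', hsym j i, hvi]; ring
    rw [this, ← hSdef]
  have hcross2 : (∑ k ∈ Finset.univ.erase i, v i * B i k * v k) = -S / 2 * S := by
    have : (∑ k ∈ Finset.univ.erase i, v i * B i k * v k)
        = -S / 2 * ∑ j ∈ Finset.univ.erase i, (B i j) ^ 2 := by
      rw [Finset.mul_sum]
      refine Finset.sum_congr rfl fun j hj => ?_
      have hj' : j ≠ i := Finset.ne_of_mem_erase hj
      rw [hvj j hj', hvi]; ring
    rw [this, ← hSdef]
  have hdiagterm : v i * B i i * v i = 2 * (S / 2) ^ 2 := by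
    rw [hvi, hdiag i]; ring
  -- bound the principal block
  have hT : (∑ j ∈ Finset.univ.erase i, ∑ k ∈ Finset.univ.erase i, v j * B j k * v k)
      ≤ 2 * S := by
    have hstep : ∀ j ∈ Finset.univ.erase i,
        ∑ k ∈ Finset.univ.erase i, v j * B j k * v k ≤ 2 * (B i j) ^ 2 := by
      intro j hj
      have hj' : j ≠ i := Finset.ne_of_mem_erase hj
      have hji : j ∈ Finset.univ.erase i := hj
      rw [← Finset.sum_erase_add _ _ hji]
      have h1 : ∑ k ∈ (Finset.univ.erase i).erase j, v j * B j k * v k ≤ 0 := by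
        refine Finset.sum_nonpos fun k hk => ?_
        have hkj : k ≠ j := Finset.ne_of_mem_erase hk
        have hki : k ≠ i := Finset.ne_of_mem_erase (Finset.mem_of_mem_erase hk)
        rw [hvj j hj', hvj k hki]
        have h2 : B j k ≤ 0 := hneg j k (fun h => hkj h.symm)
        have h3 : B i j ≤ 0 := hneg i j (fun h => hj' h.symm)
        have h4 : B i k ≤ 0 := hneg i k (fun h => hki h.symm)
        have h5 : 0 ≤ B i j * B j k := by nlinarith [mul_nonneg (neg_nonneg.2 h3) (neg_nonneg.2 h2)]
        nlinarith
      have h2 : v j * B j j * v j = 2 * (B i j) ^ 2 := by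
        rw [hvj j hj', hdiag j]; ring
      linarith
    calc (∑ j ∈ Finset.univ.erase i, ∑ k ∈ Finset.univ.erase i, v j * B j k * v k)
        ≤ ∑ j ∈ Finset.univ.erase i, 2 * (B i j) ^ 2 := Finset.sum_le_sum hstep
      _ = 2 * S := by rw [Finset.mul_sum]
  rw [hcross1, hcross2, hdiagterm] at hQ
  nlinarith
end

section
/- For every l ≥ 2, the real symmetric tridiagonal l×l matrix T with T i i = 2 for all i, T 1 2 = T 2 1 = −√2, T i (i+1) = T (i+1) i = −1 for 2 ≤ i ≤ l−1, and all other entries 0, is positive definite; its leading principal minor of order i equals 2 for every 2 ≤ i ≤ l, and in particular det T = 2. -/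
open Matrix

noncomputable def Bmat (n : ℕ) : Matrix (Fin n) (Fin n) ℝ :=
  fun i j =>
    if i = j then (if (i : ℕ) = 0 then Real.sqrt 2 else 1)
    else if (i : ℕ) + 1 = (j : ℕ) then -1 else 0

lemma Bmat_eq_zero {n : ℕ} {k a : Fin n} (h1 : k ≠ a) (h2 : (k : ℕ) + 1 ≠ (a : ℕ)) :
    Bmat n k a = 0 := by
  simp [Bmat, h1, h2]

lemma Bmat_self {n : ℕ} (k : Fin n) :
    Bmat n k k = if (k : ℕ) = 0 then Real.sqrt 2 else 1 := by
  simp [Bmat]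

lemma Bmat_succ {n : ℕ} {k a : Fin n} (h : (k : ℕ) + 1 = (a : ℕ)) :
    Bmat n k a = -1 := by
  have hk : k ≠ a := by
    intro he; subst he; omega
  simp [Bmat, hk, h]

noncomputable def formula (n : ℕ) (a b : Fin n) : ℝ :=
  if (a : ℕ) = (b : ℕ) then 2
  else if ((a : ℕ) = 0 ∧ (b : ℕ) = 1) ∨ ((b : ℕ) = 0 ∧ (a : ℕ) = 1) then -Real.sqrt 2
  else if (a : ℕ) + 1 = (b : ℕ) ∨ (b : ℕ) + 1 = (a : ℕ) then -1 else 0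

lemma key (n : ℕ) (a b : Fin n) : ((Bmat n)ᵀ * Bmat n) a b = formula n a b := by
  have hmul : ((Bmat n)ᵀ * Bmat n) a b = ∑ k : Fin n, Bmat n k a * Bmat n k b := by
    simp [Matrix.mul_apply, Matrix.transpose_apply]
  rw [hmul]
  by_cases hab : (a : ℕ) = (b : ℕ)
  · have hab' : a = b := Fin.ext hab
    subst hab'
    by_cases h0 : (a : ℕ) = 0
    · rw [Finset.sum_eq_single a]
      · rw [Bmat_self a, if_pos h0, Real.mul_self_sqrt (by norm_num)]
        simp [formula]
      · intro k _ hk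
        rw [Bmat_eq_zero hk (by omega), zero_mul]
      · simp
    · -- two nonzero terms: a and its predecessor a'
      have ha' : (a : ℕ) - 1 < n := by omega
      set a' : Fin n := ⟨(a : ℕ) - 1, ha'⟩ with ha'def
      have hne : a' ≠ a := by
        intro he
        have : (a' : ℕ) = (a : ℕ) := by rw [he]
        simp [ha'def] at this; omega
      have hsub : (Finset.univ : Finset (Fin n)).sum (fun k => Bmat n k a * Bmat n k a)
          = ∑ k ∈ ({a', a} : Finset (Fin n)), Bmat n k a * Bmat n k a := by
        symm
        apply Finset.sum_subset (Finset.subset_univ _)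
        intro k _ hk
        simp only [Finset.mem_insert, Finset.mem_singleton, not_or] at hk
        have h2 : (k : ℕ) + 1 ≠ (a : ℕ) := by
          intro he
          apply hk.1
          apply Fin.ext
          simp [ha'def]; omega
        rw [Bmat_eq_zero hk.2 h2, zero_mul]
      rw [hsub, Finset.sum_pair hne]
      have hsucc : (a' : ℕ) + 1 = (a : ℕ) := by simp [ha'def]; omega
      rw [Bmat_succ hsucc, Bmat_self a, if_neg h0]
      simp [formula]
      norm_num
  · by_cases h1 : (a : ℕ) + 1 = (b : ℕ)
    · rw [Finset.sum_eq_single a]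
      · rw [Bmat_self a]
        have : Bmat n a b = -1 := by
          have hab' : a ≠ b := by intro he; subst he; omega
          simp [Bmat, hab', h1]
        rw [this]
        by_cases h0 : (a : ℕ) = 0
        · rw [if_pos h0]
          have hb : (b : ℕ) = 1 := by omega
          simp [formula, hab, h0, hb]
        · rw [if_neg h0]
          have : ¬(((a : ℕ) = 0 ∧ (b : ℕ) = 1) ∨ ((b : ℕ) = 0 ∧ (a : ℕ) = 1)) := by omega
          simp [formula, hab, this, h1]
      · intro k _ hk
        by_cases hk1 : (k : ℕ) + 1 = (a : ℕ)
        · have hkb : k ≠ b := by intro he; subst he; omega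
          rw [Bmat_eq_zero hkb (by omega), mul_zero]
        · rw [Bmat_eq_zero hk hk1, zero_mul]
      · simp
    · by_cases h2 : (b : ℕ) + 1 = (a : ℕ)
      · rw [Finset.sum_eq_single b]
        · rw [Bmat_self b]
          have : Bmat n b a = -1 := Bmat_succ h2
          rw [this]
          by_cases h0 : (b : ℕ) = 0
          · rw [if_pos h0]
            have ha : (a : ℕ) = 1 := by omega
            simp [formula, hab, h0, ha]
          · rw [if_neg h0]
            have : ¬(((a : ℕ) = 0 ∧ (b : ℕ) = 1) ∨ ((b : ℕ) = 0 ∧ (a : ℕ) = 1)) := by omega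
            simp [formula, hab, this, h2]
        · intro k _ hk
          by_cases hk1 : (k : ℕ) + 1 = (b : ℕ)
          · have hka : k ≠ a := by intro he; subst he; omega
            rw [Bmat_eq_zero hka (by omega), zero_mul]
          · rw [Bmat_eq_zero hk hk1, mul_zero]
        · simp
      · rw [Finset.sum_eq_zero]
        · have : ¬(((a : ℕ) = 0 ∧ (b : ℕ) = 1) ∨ ((b : ℕ) = 0 ∧ (a : ℕ) = 1)) := by omega
          simp [formula, hab, this, h1, h2]
        · intro k _
          by_cases hka : k = a
          · subst hka
            have : k ≠ b := by intro he; subst he; omega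
            rw [Bmat_eq_zero this (by omega), mul_zero]
          · by_cases hk1 : (k : ℕ) + 1 = (a : ℕ)
            · have hkb : k ≠ b := by intro he; subst he; omega
              rw [Bmat_eq_zero hkb (by omega), mul_zero]
            · rw [Bmat_eq_zero hka hk1, zero_mul]

lemma det_Bmat (n : ℕ) (hn : 1 ≤ n) : (Bmat n).det = Real.sqrt 2 := by
  have htri : (Bmat n).BlockTriangular id := by
    intro i j h
    simp only [id] at h
    exact Bmat_eq_zero (by intro he; subst he; omega) (by omega)
  rw [Matrix.det_of_upperTriangular htri]
  obtain ⟨m, rfl⟩ : ∃ m, n = m + 1 := ⟨n - 1, by omega⟩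
  rw [Fin.prod_univ_succ]
  simp [Bmat_self]

lemma det_key (n : ℕ) (hn : 1 ≤ n) : ((Bmat n)ᵀ * Bmat n).det = 2 := by
  rw [Matrix.det_mul, Matrix.det_transpose, det_Bmat n hn,
    Real.mul_self_sqrt (by norm_num)]

/-- the B_l/C_l symmetrised Cartan matrix is positive definite and
its leading principal minor of order `i` equals `2` for `2 ≤ i ≤ l`;
in particular `det T = 2`. -/
theorem stmt7 {l : ℕ} (hl : 2 ≤ l) (T : Matrix (Fin l) (Fin l) ℝ)
    (hT : ∀ i j : Fin l, T i j =
      if i = j then 2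
      else if (i.val = 0 ∧ j.val = 1) ∨ (j.val = 0 ∧ i.val = 1) then -Real.sqrt 2
      else if i.val + 1 = j.val ∨ j.val + 1 = i.val then -1
      else 0) :
    T.PosDef ∧
    (∀ i : ℕ, ∀ _ : 2 ≤ i, ∀ hil : i ≤ l,
      (T.submatrix (Fin.castLE hil) (Fin.castLE hil)).det = 2) ∧
    T.det = 2 := by
  have hTf : ∀ i j : Fin l, T i j = formula l i j := by
    intro i j
    rw [hT i j]
    unfold formula
    congr 1
    simp [Fin.ext_iff]
  have hTB : T = (Bmat l)ᵀ * Bmat l := by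
    ext i j
    rw [hTf i j, key]
  have hdet : T.det = 2 := by rw [hTB]; exact det_key l (by omega)
  have hminor : ∀ i : ℕ, ∀ _ : 2 ≤ i, ∀ hil : i ≤ l,
      (T.submatrix (Fin.castLE hil) (Fin.castLE hil)).det = 2 := by
    intro i hi2 hil
    have : T.submatrix (Fin.castLE hil) (Fin.castLE hil) = (Bmat i)ᵀ * Bmat i := by
      ext a b
      rw [Matrix.submatrix_apply, hTf, key]
      rfl
    rw [this]
    exact det_key i (by omega)
  refine ⟨?_, hminor, hdet⟩
  have hsemi : T.PosSemidef := by
    rw [hTB, ← Matrix.conjTranspose_eq_transpose_of_trivial]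
    exact Matrix.posSemidef_conjTranspose_mul_self _
  refine Matrix.posDef_iff_dotProduct_mulVec.mpr ⟨hsemi.isHermitian, fun x hx => ?_⟩
  have hne : star x ⬝ᵥ T *ᵥ x ≠ 0 := by
    rw [Ne, hsemi.dotProduct_mulVec_zero_iff]
    intro h0
    have hdet0 : T.det = 0 := by
      rw [← Matrix.exists_mulVec_eq_zero_iff]
      exact ⟨x, hx, h0⟩
    rw [hdet] at hdet0
    norm_num at hdet0
  have hge : 0 ≤ star x ⬝ᵥ T *ᵥ x := (Matrix.posSemidef_iff_dotProduct_mulVec.mp hsemi).2 x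
  exact lt_of_le_of_ne hge (Ne.symm hne)
end

section
/- For l ≥ 3, let T be the real symmetric tridiagonal l×l matrix with T i i = 2 for all i, T 1 2 = T 2 1 = −1, T 2 3 = T 3 2 = −√2, T i (i+1) = T (i+1) i = −1 for 3 ≤ i ≤ l−1, and all other entries 0. Then the leading principal minor of T of order i equals 5 − i for every 2 ≤ i ≤ l, and T is positive definite if and only if l ≤ 4. In particular the F_4 matrix (the case l = 4) is positive definite. -/
open Matrix Finset

noncomputable def Mch (n : ℕ) : Matrix (Fin n) (Fin n) ℝ :=
  Matrix.of fun i j =>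
    if i.val = j.val then 2
    else if (i.val = 1 ∧ j.val = 2) ∨ (j.val = 1 ∧ i.val = 2) then -Real.sqrt 2
    else if i.val + 1 = j.val ∨ j.val + 1 = i.val then -1
    else 0

lemma Mch_sub {n m : ℕ} (h : n ≤ m) :
    (Mch m).submatrix (Fin.castLE h) (Fin.castLE h) = Mch n := rfl

lemma Mch_det1 : (Mch 1).det = 2 := by
  rw [Matrix.det_fin_one]; simp [Mch]

lemma Mch_det2 : (Mch 2).det = 3 := by
  rw [Matrix.det_fin_two]; simp [Mch]; norm_num

lemma Mch_rec (n : ℕ) :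
    (Mch (n+3)).det = 2 * (Mch (n+2)).det
      - (if n = 0 then 2 else 1) * (Mch (n+1)).det := by
  set c : ℝ := if n = 0 then -Real.sqrt 2 else -1 with hc
  set A := Mch (n+3) with hA
  have hcc : c * c = if n = 0 then 2 else 1 := by
    rcases eq_or_ne n 0 with h | h
    · simp only [hc, h, if_pos]
      rw [neg_mul_neg, Real.mul_self_sqrt (by norm_num)]
    · simp [hc, h]
  have hval : ((⟨n+1, by omega⟩ : Fin (n+3)) : ℕ) = n + 1 := rfl
  rw [Matrix.det_succ_row A (Fin.last (n+2))]
  rw [Finset.sum_eq_add_of_mem (⟨n+1, by omega⟩ : Fin (n+3)) (Fin.last (n+2))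
    (Finset.mem_univ _) (Finset.mem_univ _) (by simp [Fin.ext_iff])
    (by
      rintro j _ ⟨hj1, hj2⟩
      have hj := j.isLt
      have hj1' : (j : ℕ) ≠ n + 1 := by
        intro h; exact hj1 (Fin.ext (by rw [h, hval]))
      have hj2' : (j : ℕ) ≠ n + 2 := by
        intro h; exact hj2 (Fin.ext (by rw [h, Fin.val_last]))
      have hz : A (Fin.last (n+2)) j = 0 := by
        show (if (n+2 : ℕ) = (j : ℕ) then (2:ℝ)
          else if (n+2 = 1 ∧ (j:ℕ) = 2) ∨ ((j:ℕ) = 1 ∧ n+2 = 2) then -Real.sqrt 2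
          else if n+2+1 = (j:ℕ) ∨ (j:ℕ)+1 = n+2 then -1
          else 0) = 0
        rw [if_neg (by omega), if_neg (by omega), if_neg (by omega)]
      simp [hz])]
  have hlast : A (Fin.last (n+2)) (Fin.last (n+2)) = 2 := by
    show (if (n+2 : ℕ) = (n+2 : ℕ) then (2:ℝ) else _) = 2
    rw [if_pos rfl]
  have hsub2 : A.submatrix (Fin.last (n+2)).succAbove (Fin.last (n+2)).succAbove
      = Mch (n+2) := by
    rw [Fin.succAbove_last]; rfl
  have hentry : A (Fin.last (n+2)) (⟨n+1, by omega⟩ : Fin (n+3)) = c := by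
    show (if (n+2 : ℕ) = (n+1 : ℕ) then (2:ℝ)
      else if (n+2 = 1 ∧ n+1 = 2) ∨ (n+1 = 1 ∧ n+2 = 2) then -Real.sqrt 2
      else if n+2+1 = n+1 ∨ n+1+1 = n+2 then -1
      else 0) = c
    rcases eq_or_ne n 0 with h | h
    · subst h; rw [hc]; norm_num
    · rw [if_neg (by omega), if_neg (by omega), if_pos (by omega), hc, if_neg h]
  set B := A.submatrix (Fin.last (n+2)).succAbove
      (Fin.succAbove (⟨n+1, by omega⟩ : Fin (n+3))) with hB
  have hcol : (⟨n+1, by omega⟩ : Fin (n+3)).succAbove (Fin.last (n+1)) = Fin.last (n+2) := by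
    rw [Fin.succAbove_of_le_castSucc _ _ (by rw [Fin.le_def]; simp), Fin.succ_last]
  have hBlast : B (Fin.last (n+1)) (Fin.last (n+1)) = c := by
    show A ((Fin.last (n+2)).succAbove (Fin.last (n+1)))
        ((⟨n+1, by omega⟩ : Fin (n+3)).succAbove (Fin.last (n+1))) = c
    rw [hcol, Fin.succAbove_last]
    show (if (n+1 : ℕ) = (n+2 : ℕ) then (2:ℝ)
      else if (n+1 = 1 ∧ n+2 = 2) ∨ (n+2 = 1 ∧ n+1 = 2) then -Real.sqrt 2
      else if n+1+1 = n+2 ∨ n+2+1 = n+1 then -1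
      else 0) = c
    rcases eq_or_ne n 0 with h | h
    · subst h; rw [hc]; norm_num
    · rw [if_neg (by omega), if_neg (by omega), if_pos (by omega), hc, if_neg h]
  have hsubB : B.submatrix (Fin.last (n+1)).succAbove (Fin.last (n+1)).succAbove
      = Mch (n+1) := by
    ext i j
    have hj := j.isLt
    have h4 : (⟨n+1, by omega⟩ : Fin (n+3)).succAbove j.castSucc
        = j.castSucc.castSucc := by
      apply Fin.succAbove_of_castSucc_lt
      rw [Fin.lt_def]
      simpa using hj
    simp only [Matrix.submatrix_apply, hB, Fin.succAbove_last, h4]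
    rfl
  have hdetB : B.det = c * (Mch (n+1)).det := by
    rw [Matrix.det_succ_column B (Fin.last (n+1))]
    rw [Fintype.sum_eq_single (Fin.last (n+1)) (by
      intro i hi
      have hil := i.isLt
      have hi' : (i : ℕ) < n + 1 := by
        rcases Nat.lt_or_ge (i : ℕ) (n+1) with h | h
        · exact h
        · exact absurd (Fin.ext (by rw [Fin.val_last]; omega)) hi
      have hz : B i (Fin.last (n+1)) = 0 := by
        show A ((Fin.last (n+2)).succAbove i)
            ((⟨n+1, by omega⟩ : Fin (n+3)).succAbove (Fin.last (n+1))) = 0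
        rw [hcol, Fin.succAbove_last]
        show (if (i : ℕ) = (n+2 : ℕ) then (2:ℝ)
          else if ((i:ℕ) = 1 ∧ n+2 = 2) ∨ (n+2 = 1 ∧ (i:ℕ) = 2) then -Real.sqrt 2
          else if (i:ℕ)+1 = n+2 ∨ n+2+1 = (i:ℕ) then -1
          else 0) = 0
        rw [if_neg (by omega), if_neg (by omega), if_neg (by omega)]
      simp [hz])]
    rw [hBlast, hsubB, Fin.val_last, Even.neg_one_pow ⟨n+1, rfl⟩, one_mul]
  simp only [Fin.val_last, hval]
  rw [hentry, hdetB, hlast, hsub2,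
    Odd.neg_one_pow ⟨n+1, by ring⟩, Even.neg_one_pow ⟨n+2, by ring⟩, ← hcc]
  ring

lemma Mch_det (k : ℕ) : (Mch (k+2)).det = 5 - ((k+2 : ℕ) : ℝ) := by
  induction k using Nat.strong_induction_on with
  | _ k ih =>
    match k with
    | 0 => rw [Mch_det2]; norm_num
    | 1 =>
      rw [show (1+2 : ℕ) = 0+3 from rfl, Mch_rec 0, if_pos rfl, Mch_det2, Mch_det1]
      norm_num
    | (n+2) =>
      rw [show (n+2+2 : ℕ) = (n+1)+3 from rfl, Mch_rec (n+1), if_neg (by omega)]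
      rw [show (n+1+2 : ℕ) = (n+1)+2 from rfl, ih (n+1) (by omega),
        show (n+1+1 : ℕ) = n+2 from rfl, ih n (by omega)]
      push_cast; ring

lemma Mch_herm (n : ℕ) : (Mch n).IsHermitian := by
  ext i j
  simp only [Matrix.conjTranspose_apply, Mch, Matrix.of_apply, star_trivial]
  split_ifs <;> first | rfl | omega

lemma posdef_submatrix {m n : ℕ} {M : Matrix (Fin n) (Fin n) ℝ} (hM : M.PosDef)
    (h : m ≤ n) : (M.submatrix (Fin.castLE h) (Fin.castLE h)).PosDef := by
  have step : ∀ (g : Fin n → ℝ), (∀ j : Fin n, ¬ (j:ℕ) < m → g j = 0) →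
      ∑ j, g j = ∑ i : Fin m, g (Fin.castLE h i) := by
    intro g hg
    have hmap : ∑ j ∈ Finset.univ.map
          ⟨Fin.castLE h, fun a b hab => Fin.ext (by simpa [Fin.ext_iff] using hab)⟩, g j
        = ∑ i : Fin m, g (Fin.castLE h i) := Finset.sum_map _ _ _
    rw [← hmap]
    refine (Finset.sum_subset (Finset.subset_univ _) ?_).symm
    intro j _ hj
    refine hg j fun hjm => hj (Finset.mem_map.mpr ⟨⟨j, hjm⟩, Finset.mem_univ _, Fin.ext rfl⟩)
  refine Matrix.PosDef.of_dotProduct_mulVec_pos ?_ ?_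
  · exact hM.1.submatrix _
  · intro x hx
    set y : Fin n → ℝ := fun j => if hj : (j : ℕ) < m then x ⟨j, hj⟩ else 0 with hy
    have hyx : ∀ i : Fin m, y (Fin.castLE h i) = x i := fun i => dif_pos i.isLt
    have hyz : ∀ j : Fin n, ¬ (j:ℕ) < m → y j = 0 := fun j hj => dif_neg hj
    have hy0 : y ≠ 0 := by
      intro h0
      apply hx; ext i
      have := congrFun h0 (Fin.castLE h i)
      rw [hyx] at this; exact this
    have hinner : ∀ j : Fin n, (M *ᵥ y) j = ∑ i' : Fin m, M j (Fin.castLE h i') * x i' := by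
      intro j
      show ∑ k, M j k * y k = _
      rw [step (fun k => M j k * y k)
        (fun k hk => by show M j k * y k = 0; rw [hyz k hk, mul_zero])]
      exact Finset.sum_congr rfl fun i' _ => by rw [hyx]
    have key : dotProduct (star x) ((M.submatrix (Fin.castLE h) (Fin.castLE h)) *ᵥ x)
        = dotProduct (star y) (M *ᵥ y) := by
      simp only [star_trivial]
      show ∑ i, x i * _ = ∑ j, y j * _
      rw [step (fun j => y j * (M *ᵥ y) j)
        (fun j hj => by show y j * (M *ᵥ y) j = 0; rw [hyz j hj, zero_mul])]
      refine Finset.sum_congr rfl fun i _ => ?_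
      rw [hyx, hinner]
      rfl
    rw [key]
    exact hM.dotProduct_mulVec_pos hy0

set_option maxRecDepth 10000 in
lemma Mch3_posdef : (Mch 3).PosDef := by
  refine Matrix.PosDef.of_dotProduct_mulVec_pos (Mch_herm 3) fun x hx => ?_
  have h0 : x 0 ≠ 0 ∨ x 1 ≠ 0 ∨ x 2 ≠ 0 := by
    by_contra hc; push_neg at hc
    exact hx (by ext i; fin_cases i <;> simp [hc.1, hc.2.1, hc.2.2])
  set s := Real.sqrt 2 with hsdef
  have hs : s * s = 2 := Real.mul_self_sqrt (by norm_num)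
  have hspos : 0 < s := Real.sqrt_pos.mpr (by norm_num)
  set u := s * x 2 with hu
  have hu2 : u * u = 2 * (x 2 * x 2) := by rw [hu]; linear_combination (x 2 * x 2) * hs
  have expand : dotProduct (star x) ((Mch 3) *ᵥ x)
      = 2*x 0*x 0 + 2*x 1*x 1 + 2*x 2*x 2 - 2*(x 0*x 1) - 2*s*(x 1*x 2) := by
    simp [dotProduct, Matrix.mulVec, Fin.sum_univ_succ, Mch]
    ring
  have key : dotProduct (star x) ((Mch 3) *ᵥ x)
      = x 0^2 + (x 0 - x 1)^2 + (x 1 - u)^2 := by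
    rw [expand, hu]; linear_combination (-(x 2 * x 2)) * hs
  rw [key]
  rcases h0 with h | h | h
  · nlinarith [sq_nonneg (x 0 - x 1), sq_nonneg (x 1 - u), mul_self_pos.mpr h]
  · nlinarith [sq_nonneg (2*x 0 - x 1), sq_nonneg (x 1 - u), sq_nonneg (x 0),
      sq_nonneg (x 0 - x 1), mul_self_pos.mpr h]
  · nlinarith [sq_nonneg (2*x 0 - x 1), sq_nonneg (2*x 1 - u), sq_nonneg (x 0),
      sq_nonneg (x 0 - x 1), sq_nonneg (x 1 - u), hu2, mul_self_pos.mpr h]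

set_option maxRecDepth 10000 in
lemma Mch4_posdef : (Mch 4).PosDef := by
  refine Matrix.PosDef.of_dotProduct_mulVec_pos (Mch_herm 4) fun x hx => ?_
  have h0 : x 0 ≠ 0 ∨ x 1 ≠ 0 ∨ x 2 ≠ 0 ∨ x 3 ≠ 0 := by
    by_contra hc; push_neg at hc
    exact hx (by ext i; fin_cases i <;> simp [hc.1, hc.2.1, hc.2.2.1, hc.2.2.2])
  set s := Real.sqrt 2 with hsdef
  have hs : s * s = 2 := Real.mul_self_sqrt (by norm_num)
  set u := s * x 2 with hu
  have hu2 : u * u = 2 * (x 2 * x 2) := by rw [hu]; linear_combination (x 2 * x 2) * hs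
  have expand : dotProduct (star x) ((Mch 4) *ᵥ x)
      = 2*x 0*x 0 + 2*x 1*x 1 + 2*x 2*x 2 + 2*x 3*x 3
        - 2*(x 0*x 1) - 2*s*(x 1*x 2) - 2*(x 2*x 3) := by
    simp [dotProduct, Matrix.mulVec, Fin.sum_univ_succ, Mch,
      show Fin.succ 2 = (3 : Fin 4) from rfl]
    ring
  have key : 6 * dotProduct (star x) ((Mch 4) *ᵥ x)
      = 3*(2*x 0 - x 1)^2 + (3*x 1 - 2*u)^2 + (2*x 2 - 3*x 3)^2 + 3*x 3^2 := by
    rw [expand, hu]; linear_combination (-(4*(x 2 * x 2))) * hs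
  have k1 := sq_nonneg (2*x 0 - x 1)
  have k2 := sq_nonneg (3*x 1 - 2*u)
  have k3 := sq_nonneg (2*x 2 - 3*x 3)
  have k4 := sq_nonneg (x 3)
  have e1 := sq_nonneg (2*x 0 - 2*x 1)
  have e2 := sq_nonneg (3*x 1 - 4*u)
  have e3 := sq_nonneg (2*x 2 - 6*x 3)
  rcases h0 with h | h | h | h
  · nlinarith [mul_self_pos.mpr h, key, hu2]
  · nlinarith [mul_self_pos.mpr h, key, hu2]
  · nlinarith [mul_self_pos.mpr h, key, hu2]
  · nlinarith [mul_self_pos.mpr h, key, hu2]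

set_option maxRecDepth 10000 in
/-- the chain *−*=*−*−*⋯ (double line in second position).
Its leading principal minor of order `i` equals `5 - i` for `2 ≤ i ≤ l`,
and it is positive definite iff `l ≤ 4` (the `l = 4` case being `F₄`). -/
theorem stmt8 {l : ℕ} (hl : 3 ≤ l) (T : Matrix (Fin l) (Fin l) ℝ)
    (hT : ∀ i j : Fin l, T i j =
      if i = j then 2
      else if (i.val = 1 ∧ j.val = 2) ∨ (j.val = 1 ∧ i.val = 2) then -Real.sqrt 2
      else if i.val + 1 = j.val ∨ j.val + 1 = i.val then -1
      else 0) :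
    (∀ i : ℕ, ∀ _ : 2 ≤ i, ∀ hil : i ≤ l,
      (T.submatrix (Fin.castLE hil) (Fin.castLE hil)).det = 5 - (i : ℝ)) ∧
    (T.PosDef ↔ l ≤ 4) := by
  have hTM : T = Mch l := by
    ext i j
    rw [hT i j]
    simp only [Mch, Matrix.of_apply, Fin.ext_iff]
  constructor
  · intro i h2 hil
    obtain ⟨k, rfl⟩ : ∃ k, i = k + 2 := ⟨i - 2, by omega⟩
    rw [hTM, Mch_sub hil, Mch_det]
  · constructor
    · intro hpd
      rw [hTM] at hpd
      by_contra hl4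
      have h5 : 5 ≤ l := by omega
      have hdet := (posdef_submatrix hpd h5).det_pos
      rw [Mch_sub h5] at hdet
      have h0 : (Mch 5).det = 0 := by
        have := Mch_det 3
        norm_num at this
        exact this
      rw [h0] at hdet
      exact lt_irrefl 0 hdet
    · intro hl4
      obtain rfl | rfl : l = 3 ∨ l = 4 := by omega
      · rw [hTM]; exact Mch3_posdef
      · rw [hTM]; exact Mch4_posdef
end

section
/- For l ≥ 3, let T be the real symmetric tridiagonal l×l matrix with T i i = 2 for all i, T 1 2 = T 2 1 = −√2, T (l−1) l = T l (l−1) = −√2, T i (i+1) = T (i+1) i = −1 for 2 ≤ i ≤ l−2, and all other entries 0. Then the leading principal minor of T of order i equals 2 for 2 ≤ i ≤ l−1 and det T = 0; in particular T is not positive definite. -/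
/-!
The matrix factors as `T = Cᵀ C` (a Cholesky factorization) with `C` upper bidiagonal, with
diagonal `(√2, 1, …, 1, 0)` and superdiagonal `(-1, …, -1, -√2)`. Since `C` is upper triangular,
the leading `n × n` block of `T` is `Cₙᵀ Cₙ` for the leading block `Cₙ` of `C`, so the leading
principal minor of order `n` is the square of the product of the first `n` diagonal entries of
`C`: this is `2` for `1 ≤ n ≤ l - 1` and `0` for `n = l`. A positive definite matrix has positive
determinant.
-/

open Matrix Finset

namespace Matrix

variable {R : Type*} [CommRing R]

/-- `e j` is the entry above the diagonal in column `j`, so `e 0` is never used. -/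
def upperBidiagonal (n : ℕ) (d e : ℕ → R) : Matrix (Fin n) (Fin n) R :=
  Matrix.of fun i j => if (i : ℕ) = j then d j else if (i : ℕ) + 1 = j then e j else 0

theorem transpose_mul_self_upperBidiagonal_apply (n : ℕ) (d e : ℕ → R) (a b : Fin n) :
    ((upperBidiagonal n d e)ᵀ * upperBidiagonal n d e) a b =
      if (a : ℕ) = b then d a ^ 2 + (if (a : ℕ) = 0 then 0 else e a ^ 2)
      else if (a : ℕ) + 1 = b then d a * e b
      else if (b : ℕ) + 1 = a then d b * e a
      else 0 := by
  set c : ℕ → ℕ → R := fun k j => if k = j then d j else if k + 1 = j then e j else 0 with hc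
  obtain ⟨a, ha⟩ := a
  obtain ⟨b, hb⟩ := b
  have hzero : ∀ k, (k ≠ a ∧ k + 1 ≠ a) ∨ (k ≠ b ∧ k + 1 ≠ b) → c k a * c k b = 0 := by
    rintro k (⟨h1, h2⟩ | ⟨h1, h2⟩) <;> simp [hc, h1, h2]
  calc ((upperBidiagonal n d e)ᵀ * upperBidiagonal n d e) ⟨a, ha⟩ ⟨b, hb⟩
      = ∑ k ∈ range n, c k a * c k b := Fin.sum_univ_eq_sum_range (fun k => c k a * c k b) n
    _ = _ := by
      dsimp only
      split_ifs with hab ha0 hab' hba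
      · subst hab ha0
        rw [sum_eq_single_of_mem 0 (mem_range.2 ha) fun k _ hk => hzero k (by omega)]
        simp [hc, sq]
      · subst hab
        rw [sum_eq_add_of_mem (a - 1) a (mem_range.2 (by omega)) (mem_range.2 ha) (by omega)
          fun k _ hk => hzero k (by omega)]
        have h1 : a - 1 ≠ a := by omega
        have h2 : a - 1 + 1 = a := by omega
        simp [hc, h1, h2, sq, add_comm]
      · rw [sum_eq_single_of_mem a (mem_range.2 ha) fun k _ hk => hzero k (by omega)]
        simp [hc, hab, hab']
      · rw [sum_eq_single_of_mem b (mem_range.2 hb) fun k _ hk => hzero k (by omega)]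
        simp [hc, Ne.symm hab, hba, mul_comm]
      · exact sum_eq_zero fun k _ => hzero k (by omega)

theorem det_upperBidiagonal (n : ℕ) (d e : ℕ → R) :
    (upperBidiagonal n d e).det = ∏ k ∈ range n, d k := by
  rw [det_of_isUpperTriangular, ← Fin.prod_univ_eq_prod_range]
  · simp [upperBidiagonal]
  · intro i j hij
    have : (j : ℕ) < i := hij
    simp only [upperBidiagonal, of_apply]
    split_ifs <;> first | omega | rfl

end Matrix

noncomputable section

def doubleEndedCartan (l : ℕ) : Matrix (Fin l) (Fin l) ℝ :=
  Matrix.of fun i j =>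
    if i = j then 2
    else if (i.val = 0 ∧ j.val = 1) ∨ (j.val = 0 ∧ i.val = 1) ∨
            (i.val + 1 = j.val ∧ j.val = l - 1) ∨
            (j.val + 1 = i.val ∧ i.val = l - 1) then -√2
    else if i.val + 1 = j.val ∨ j.val + 1 = i.val then -1
    else 0

def doubleEndedCartanFactorDiag (l k : ℕ) : ℝ :=
  if k = 0 then √2 else if k = l - 1 then 0 else 1

def doubleEndedCartanFactorSuperdiag (l k : ℕ) : ℝ :=
  if k = l - 1 then -√2 else -1

def doubleEndedCartanFactor (l n : ℕ) : Matrix (Fin n) (Fin n) ℝ :=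
  upperBidiagonal n (doubleEndedCartanFactorDiag l) (doubleEndedCartanFactorSuperdiag l)

theorem doubleEndedCartan_submatrix_castLE {l n : ℕ} (hl : 3 ≤ l) (hn : n ≤ l) :
    (doubleEndedCartan l).submatrix (Fin.castLE hn) (Fin.castLE hn) =
      (doubleEndedCartanFactor l n)ᵀ * doubleEndedCartanFactor l n := by
  ext ⟨a, ha⟩ ⟨b, hb⟩
  have hsq : √2 ^ 2 = 2 := Real.sq_sqrt zero_le_two
  rw [doubleEndedCartanFactor, transpose_mul_self_upperBidiagonal_apply]
  simp only [doubleEndedCartan, doubleEndedCartanFactorDiag, doubleEndedCartanFactorSuperdiag,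
    submatrix_apply, of_apply, Fin.castLE_mk, Fin.mk.injEq]
  split_ifs <;> first | omega | norm_num [hsq]

theorem det_doubleEndedCartan_submatrix_castLE {l n : ℕ} (hl : 3 ≤ l) (hn : n ≤ l) :
    ((doubleEndedCartan l).submatrix (Fin.castLE hn) (Fin.castLE hn)).det =
      (∏ k ∈ range n, doubleEndedCartanFactorDiag l k) ^ 2 := by
  rw [doubleEndedCartan_submatrix_castLE hl, det_mul, det_transpose, doubleEndedCartanFactor,
    det_upperBidiagonal, sq]

theorem prod_range_doubleEndedCartanFactorDiag {l n : ℕ} (hn : 1 ≤ n) (hnl : n ≤ l - 1) :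
    ∏ k ∈ range n, doubleEndedCartanFactorDiag l k = √2 := by
  rw [prod_eq_single_of_mem 0 (mem_range.2 hn)]
  · simp [doubleEndedCartanFactorDiag]
  · intro k hk hk0
    have : k ≠ l - 1 := by have := mem_range.1 hk; omega
    simp [doubleEndedCartanFactorDiag, hk0, this]

theorem prod_range_doubleEndedCartanFactorDiag_self {l : ℕ} (hl : 2 ≤ l) :
    ∏ k ∈ range l, doubleEndedCartanFactorDiag l k = 0 :=
  prod_eq_zero (mem_range.2 (by omega : l - 1 < l))
    (by simp [doubleEndedCartanFactorDiag, show l - 1 ≠ 0 by omega])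

end

/-- the chain *=*−*⋯*−*=* with double lines at both ends.
Its leading principal minor of order `i` equals `2` for `2 ≤ i ≤ l - 1`,
its determinant is `0`, and it is not positive definite. -/
theorem stmt9 {l : ℕ} (hl : 3 ≤ l) (T : Matrix (Fin l) (Fin l) ℝ)
    (hT : ∀ i j : Fin l, T i j =
      if i = j then 2
      else if (i.val = 0 ∧ j.val = 1) ∨ (j.val = 0 ∧ i.val = 1) ∨
              (i.val + 1 = j.val ∧ j.val = l - 1) ∨
              (j.val + 1 = i.val ∧ i.val = l - 1) then -Real.sqrt 2
      else if i.val + 1 = j.val ∨ j.val + 1 = i.val then -1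
      else 0) :
    (∀ i : ℕ, ∀ _ : 2 ≤ i, ∀ hil : i ≤ l - 1,
      (T.submatrix (Fin.castLE (le_trans hil (Nat.sub_le l 1)))
        (Fin.castLE (le_trans hil (Nat.sub_le l 1)))).det = 2) ∧
    T.det = 0 ∧ ¬ T.PosDef := by
  obtain rfl : T = doubleEndedCartan l := Matrix.ext hT
  have hdet : (doubleEndedCartan l).det = 0 := by
    simpa [prod_range_doubleEndedCartanFactorDiag_self (by omega : 2 ≤ l)] using
      det_doubleEndedCartan_submatrix_castLE hl le_rfl
  refine ⟨fun i hi hil => ?_, hdet, fun hpd => hpd.det_pos.ne' hdet⟩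
  rw [det_doubleEndedCartan_submatrix_castLE hl,
    prod_range_doubleEndedCartanFactorDiag (by omega) hil]
  exact Real.sq_sqrt zero_le_two
end

section
/- Let m ≥ 1, let Z be any real symmetric m×m matrix, and let Y be the 3×m real matrix all of whose entries are 0 except Y 3 1 = −1. Let X = [[2, 0, −1], [0, 2, −1], [−1, −1, 2]] and X' = [[2, 0, 0], [0, 2, −√2], [0, −√2, 2]]. Then the block matrix [[X, Y], [Yᵀ, Z]] is positive definite if and only if the block matrix [[X', Y], [Yᵀ, Z]] is positive definite. -/
open Matrix

lemma posdef_congr_aux {n : Type*} [Fintype n] [DecidableEq n] {M : Matrix n n ℝ}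
    (hM : M.PosDef) (P : Matrix n n ℝ) (hP : IsUnit P) : (P * M * Pᵀ).PosDef := by
  have hPt : Pᴴ = Pᵀ := by ext i j; simp [conjTranspose_apply]
  refine PosDef.of_dotProduct_mulVec_pos ?_ ?_
  · have := isHermitian_mul_mul_conjTranspose P hM.1
    rwa [hPt] at this
  · intro x hx
    have hy : Pᵀ *ᵥ x ≠ 0 := by
      intro h
      exact hx ((mulVec_injective_iff_isUnit.2 ((isUnit_transpose P).2 hP))
        (h.trans (mulVec_zero _).symm))
    have := hM.dotProduct_mulVec_pos hy
    convert this using 1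
    simp only [star_trivial, ← mulVec_mulVec]
    rw [dotProduct_mulVec x P, mulVec_transpose]

lemma posdef_congr_iff {n : Type*} [Fintype n] [DecidableEq n] (M P : Matrix n n ℝ)
    (hP : IsUnit P) : (P * M * Pᵀ).PosDef ↔ M.PosDef := by
  constructor
  · intro h
    have h2 : IsUnit (P⁻¹) := isUnit_nonsing_inv_iff.mpr hP
    have key := posdef_congr_aux h P⁻¹ h2
    have hd : IsUnit P.det := (isUnit_iff_isUnit_det P).mp hP
    have he : P⁻¹ * (P * M * Pᵀ) * P⁻¹ᵀ = M := by
      rw [show P⁻¹ * (P * M * Pᵀ) * P⁻¹ᵀ = (P⁻¹ * P) * M * (P⁻¹ * P)ᵀ by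
        rw [transpose_mul]; simp only [Matrix.mul_assoc], nonsing_inv_mul P hd]
      simp
    rwa [he] at key
  · intro h; exact posdef_congr_aux h P hP

/-- orthogonal-congruence reduction for the diagram
`(*,*)>*−*⋯`: the block matrix with corner `X` is positive definite iff the
block matrix with corner `X'` is. -/
theorem stmt10 {m : ℕ} (hm : 1 ≤ m) (Z : Matrix (Fin m) (Fin m) ℝ) (hZ : Z.IsSymm)
    (Y : Matrix (Fin 3) (Fin m) ℝ)
    (hY : ∀ i j, Y i j = if i.val = 2 ∧ j.val = 0 then -1 else 0) :
    (Matrix.fromBlocks !![2, 0, -1; 0, 2, -1; -1, -1, 2] Y Yᵀ Z).PosDef ↔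
    (Matrix.fromBlocks !![2, 0, 0; 0, 2, -Real.sqrt 2; 0, -Real.sqrt 2, 2]
      Y Yᵀ Z).PosDef := by
  set s : ℝ := Real.sqrt 2 / 2 with hs
  have h2 : Real.sqrt 2 * Real.sqrt 2 = 2 := Real.mul_self_sqrt (by norm_num)
  have hss : s * s = 1/2 := by rw [hs]; nlinarith [h2]
  set U : Matrix (Fin 3) (Fin 3) ℝ := !![s, -s, 0; s, s, 0; 0, 0, 1] with hU
  have hUdet : U.det = 1 := by
    rw [hU, Matrix.det_fin_three]
    simp
    nlinarith [hss]
  have hUunit : IsUnit U := (isUnit_iff_isUnit_det U).mpr (by rw [hUdet]; exact isUnit_one)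
  set P : Matrix (Fin 3 ⊕ Fin m) (Fin 3 ⊕ Fin m) ℝ :=
    fromBlocks U 0 0 (1 : Matrix (Fin m) (Fin m) ℝ) with hP
  have hPunit : IsUnit P := by
    rw [isUnit_iff_isUnit_det, hP, det_fromBlocks_zero₂₁, hUdet, det_one, one_mul]
    exact isUnit_one
  have hUY : U * Y = Y := by
    ext i j
    rw [Matrix.mul_apply, Fin.sum_univ_three]
    fin_cases i <;> simp [hU, hY]
  have hUt : Uᵀ = !![s, s, 0; -s, s, 0; 0, 0, 1] := by
    rw [hU]; ext i j; fin_cases i <;> fin_cases j <;> rfl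
  have hUX : U * !![2, 0, -1; 0, 2, -1; -1, -1, 2] * Uᵀ =
      !![2, 0, 0; 0, 2, -Real.sqrt 2; 0, -Real.sqrt 2, 2] := by
    rw [hUt, hU]
    ext i j
    fin_cases i <;> fin_cases j <;>
      simp [Matrix.mul_apply, Fin.sum_univ_three, Matrix.vecHead, Matrix.vecTail] <;> nlinarith [hss, h2]
  have hkey : P * (fromBlocks !![2, 0, -1; 0, 2, -1; -1, -1, 2] Y Yᵀ Z) * Pᵀ =
      fromBlocks !![2, 0, 0; 0, 2, -Real.sqrt 2; 0, -Real.sqrt 2, 2] Y Yᵀ Z := by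
    rw [hP, fromBlocks_transpose, fromBlocks_multiply, fromBlocks_multiply]
    simp only [Matrix.zero_mul, Matrix.mul_zero, Matrix.one_mul, Matrix.mul_one,
      add_zero, zero_add, transpose_zero, transpose_one]
    rw [hUY, show Yᵀ * Uᵀ = Yᵀ by rw [← transpose_mul, hUY], hUX]
  rw [← hkey]
  exact (posdef_congr_iff _ P hPunit).symm
end

section
/- For every l ≥ 4, the real symmetric l×l matrix M with M i i = 2 for all i, M i j = −1 exactly when {i, j} ∈ {{1,3}, {2,3}} ∪ {{i, i+1} : 3 ≤ i ≤ l−1}, and all other entries 0, is positive definite. -/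
open Finset Matrix

noncomputable def natg (m n : ℕ) : ℝ :=
  if m = n then 2
  else if (m = 0 ∧ n = 2) ∨ (n = 0 ∧ m = 2) ∨ (m = 1 ∧ n = 2) ∨ (n = 1 ∧ m = 2) ∨
          (2 ≤ m ∧ m + 1 = n) ∨ (2 ≤ n ∧ n + 1 = m) then -1 else 0

lemma keySOS : ∀ l : ℕ, 4 ≤ l → ∀ y : ℕ → ℝ,
    ∑ i ∈ range l, ∑ j ∈ range l, y i * (natg i j * y j)
      = 2 * (y 0 - y 2 / 2) ^ 2 + 2 * (y 1 - y 2 / 2) ^ 2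
        + (∑ k ∈ Finset.Ico 2 (l - 1), (y k - y (k + 1)) ^ 2) + (y (l - 1)) ^ 2 := by
  intro l hl
  induction l, hl using Nat.le_induction with
  | base =>
      intro y
      norm_num [Finset.sum_range_succ, natg, Finset.sum_Ico_eq_sum_range]
      ring
  | succ l hl ih =>
      intro y
      have hrow : ∀ m : ℕ, m ∈ range l → m ≠ l - 1 → y m * (natg m l * y l) = 0 := by
        intro m hm hne
        have hml : m < l := mem_range.mp hm
        have : natg m l = 0 := by
          unfold natg
          split_ifs with h1 h2 <;> [omega; omega; rfl]
        simp [this]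
      have hcol : ∀ m : ℕ, m ∈ range l → m ≠ l - 1 → y l * (natg l m * y m) = 0 := by
        intro m hm hne
        have hml : m < l := mem_range.mp hm
        have : natg l m = 0 := by
          unfold natg
          split_ifs with h1 h2 <;> [omega; omega; rfl]
        simp [this]
      have hmem : l - 1 ∈ range l := by simp; omega
      have hgl : natg (l-1) l = -1 := by unfold natg; split_ifs with h1 h2 <;> [omega; rfl; omega]
      have hgl' : natg l (l-1) = -1 := by unfold natg; split_ifs with h1 h2 <;> [omega; rfl; omega]
      have hgll : natg l l = 2 := by unfold natg; simp
      have e1 : ∑ i ∈ range l, y i * (natg i l * y l) = y (l-1) * (-1 * y l) := by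
        rw [Finset.sum_eq_single_of_mem _ hmem hrow, hgl]
      have e2 : ∑ j ∈ range l, y l * (natg l j * y j) = y l * (-1 * y (l-1)) := by
        rw [Finset.sum_eq_single_of_mem _ hmem hcol, hgl']
      have h1 : l + 1 - 1 = (l-1) + 1 := by omega
      have hIco : ∑ k ∈ Finset.Ico 2 (l + 1 - 1), (y k - y (k + 1)) ^ 2
          = (∑ k ∈ Finset.Ico 2 (l-1), (y k - y (k + 1)) ^ 2) + (y (l-1) - y (l-1+1)) ^ 2 := by
        rw [h1, Finset.sum_Ico_succ_top (by omega)]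
      have hy : y (l - 1 + 1) = y l := by congr 1; omega
      calc ∑ i ∈ range (l+1), ∑ j ∈ range (l+1), y i * (natg i j * y j)
          = (∑ i ∈ range l, ∑ j ∈ range l, y i * (natg i j * y j))
              + (∑ i ∈ range l, y i * (natg i l * y l))
              + ((∑ j ∈ range l, y l * (natg l j * y j)) + y l * (natg l l * y l)) := by
            rw [Finset.sum_range_succ]
            simp only [Finset.sum_range_succ]
            rw [Finset.sum_add_distrib]
        _ = 2 * (y 0 - y 2 / 2) ^ 2 + 2 * (y 1 - y 2 / 2) ^ 2
            + (∑ k ∈ Finset.Ico 2 (l + 1 - 1), (y k - y (k + 1)) ^ 2) + (y (l + 1 - 1)) ^ 2 := by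
            rw [ih, e1, e2, hgll, hIco, hy]
            simp only [Nat.add_sub_cancel]
            ring

/-- the D_l symmetrised Cartan matrix (vertices 1 and 2 each
joined to vertex 3, which starts a chain) is positive definite for `l ≥ 4`.
(Indices here are 0-based: vertices 0 and 1 are joined to vertex 2.) -/
theorem stmt11 {l : ℕ} (hl : 4 ≤ l) (M : Matrix (Fin l) (Fin l) ℝ)
    (hM : ∀ i j : Fin l, M i j =
      if i = j then 2
      else if (i.val = 0 ∧ j.val = 2) ∨ (j.val = 0 ∧ i.val = 2) ∨
              (i.val = 1 ∧ j.val = 2) ∨ (j.val = 1 ∧ i.val = 2) ∨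
              (2 ≤ i.val ∧ i.val + 1 = j.val) ∨
              (2 ≤ j.val ∧ j.val + 1 = i.val) then -1
      else 0) :
    M.PosDef := by
  have hMg : ∀ i j : Fin l, M i j = natg i.val j.val := by
    intro i j
    rw [hM]
    unfold natg
    simp [Fin.ext_iff]
  rw [Matrix.posDef_iff_dotProduct_mulVec]
  constructor
  · ext i j
    simp only [Matrix.conjTranspose_apply, hMg, star_trivial]
    unfold natg
    split_ifs <;> first | rfl | omega
  · intro x hx
    rw [star_trivial]
    set y : ℕ → ℝ := fun n => if h : n < l then x ⟨n, h⟩ else 0 with hy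
    have hxy : ∀ i : Fin l, x i = y i.val := by
      intro i
      simp [hy, i.isLt]
    have hinner : ∀ m : ℕ, (∑ j : Fin l, y m * (natg m j.val * y j.val))
        = ∑ j ∈ range l, y m * (natg m j * y j) := by
      intro m
      exact Fin.sum_univ_eq_sum_range (fun j => y m * (natg m j * y j)) l
    have hquad : dotProduct x (M *ᵥ x) = ∑ i ∈ range l, ∑ j ∈ range l, y i * (natg i j * y j) := by
      simp only [dotProduct, Matrix.mulVec, hxy, hMg, Finset.mul_sum]
      simp only [hinner]
      exact Fin.sum_univ_eq_sum_range (fun i => ∑ j ∈ range l, y i * (natg i j * y j)) l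
    rw [hquad, keySOS l hl y]
    -- positivity
    have hA : (0:ℝ) ≤ 2 * (y 0 - y 2 / 2) ^ 2 := by positivity
    have hB : (0:ℝ) ≤ 2 * (y 1 - y 2 / 2) ^ 2 := by positivity
    have hC : (0:ℝ) ≤ ∑ k ∈ Finset.Ico 2 (l - 1), (y k - y (k + 1)) ^ 2 :=
      Finset.sum_nonneg fun k _ => sq_nonneg _
    have hD : (0:ℝ) ≤ (y (l - 1)) ^ 2 := sq_nonneg _
    rcases lt_or_eq_of_le (by linarith :
      (0:ℝ) ≤ 2 * (y 0 - y 2 / 2) ^ 2 + 2 * (y 1 - y 2 / 2) ^ 2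
        + (∑ k ∈ Finset.Ico 2 (l - 1), (y k - y (k + 1)) ^ 2) + (y (l - 1)) ^ 2) with hpos | h0
    · exact hpos
    exfalso
    -- all squares vanish
    have hA0 : y 0 - y 2 / 2 = 0 := by nlinarith [sq_nonneg (y 0 - y 2 / 2)]
    have hB0 : y 1 - y 2 / 2 = 0 := by nlinarith [sq_nonneg (y 1 - y 2 / 2)]
    have hD0 : y (l - 1) = 0 := by nlinarith [sq_nonneg (y (l-1))]
    have hC0 : ∀ k ∈ Finset.Ico 2 (l - 1), (y k - y (k + 1)) ^ 2 = 0 := by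
      intro k hk
      have hCsum : ∑ k ∈ Finset.Ico 2 (l - 1), (y k - y (k + 1)) ^ 2 = 0 := by nlinarith
      exact (Finset.sum_eq_zero_iff_of_nonneg fun k _ => sq_nonneg _).mp hCsum k hk
    have hstep : ∀ k, 2 ≤ k → k < l - 1 → y k = y (k + 1) := by
      intro k h2 hk
      have := hC0 k (Finset.mem_Ico.mpr ⟨h2, hk⟩)
      have := sq_eq_zero_iff.mp this
      linarith
    have hchain : ∀ d : ℕ, 2 ≤ l - 1 - d → y (l - 1 - d) = 0 := by
      intro d
      induction d with
      | zero => intro _; simpa using hD0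
      | succ d ihd =>
          intro h2
          have h1 : l - 1 - (d + 1) + 1 = l - 1 - d := by omega
          have := hstep (l - 1 - (d+1)) (by omega) (by omega)
          rw [h1] at this
          rw [this]
          exact ihd (by omega)
    have hzero : ∀ k, k < l → y k = 0 := by
      intro k hk
      match k, hk with
      | 0, _ =>
          have h2 : y 2 = 0 := by
            have := hchain (l - 1 - 2) (by omega)
            have he : l - 1 - (l - 1 - 2) = 2 := by omega
            rwa [he] at this
          linarith
      | 1, _ =>
          have h2 : y 2 = 0 := by
            have := hchain (l - 1 - 2) (by omega)
            have he : l - 1 - (l - 1 - 2) = 2 := by omega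
            rwa [he] at this
          linarith
      | (k+2), hk =>
          have := hchain (l - 1 - (k+2)) (by omega)
          have he : l - 1 - (l - 1 - (k+2)) = k + 2 := by omega
          rwa [he] at this
    obtain ⟨i, hi⟩ := Function.ne_iff.mp hx
    exact hi (by rw [hxy i]; exact hzero i.val i.isLt)
end

section
/- Let m ≥ 1, let Z be any real symmetric m×m matrix, and let Y be the 4×m real matrix all of whose entries are 0 except Y 4 1 = −1. Let X = [[2, −1, 0, 0], [−1, 2, 0, −1], [0, 0, 2, −1], [0, −1, −1, 2]] and X' = [[2, −√(1/2), 0, 0], [−√(1/2), 2, −√(1/2), 0], [0, −√(1/2), 2, −√2], [0, 0, −√2, 2]]. Then the block matrix [[X, Y], [Yᵀ, Z]] is positive definite if and only if the block matrix [[X', Y], [Yᵀ, Z]] is positive definite. -/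
set_option maxHeartbeats 1000000


open Matrix

/-- Congruence by an orthogonal matrix preserves positive definiteness. -/
lemma posDef_congr_aux {n : Type*} [Fintype n] [DecidableEq n]
    {Q B : Matrix n n ℝ} (hQ : Qᵀ * Q = 1) (hB : B.PosDef) :
    (Q * B * Qᵀ).PosDef := by
  have hQQ : Q * Qᵀ = 1 := mul_eq_one_comm.mp hQ
  obtain ⟨hH, hpos⟩ := posDef_iff_dotProduct_mulVec.mp hB
  refine posDef_iff_dotProduct_mulVec.mpr ⟨?_, ?_⟩
  · have := Matrix.isHermitian_mul_mul_conjTranspose Q hH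
    rwa [Matrix.conjTranspose_eq_transpose_of_trivial] at this
  · intro x hx
    have hy : Qᵀ *ᵥ x ≠ 0 := by
      intro h
      apply hx
      have h2 := congrArg (fun v => Q *ᵥ v) h
      simpa [Matrix.mulVec_mulVec, hQQ] using h2
    have h := hpos (x := Qᵀ *ᵥ x) hy
    have key : x ⬝ᵥ (Q * B * Qᵀ) *ᵥ x = (Qᵀ *ᵥ x) ⬝ᵥ B *ᵥ (Qᵀ *ᵥ x) := by
      rw [Matrix.mul_assoc, ← Matrix.mulVec_mulVec, Matrix.dotProduct_mulVec,
        ← Matrix.mulVec_transpose, Matrix.mulVec_mulVec]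
    simpa [key] using h

lemma posDef_congr_iff {n : Type*} [Fintype n] [DecidableEq n]
    {Q B : Matrix n n ℝ} (hQ : Qᵀ * Q = 1) :
    B.PosDef ↔ (Q * B * Qᵀ).PosDef := by
  have hQQ : Q * Qᵀ = 1 := mul_eq_one_comm.mp hQ
  constructor
  · exact posDef_congr_aux hQ
  · intro h
    have h2 := posDef_congr_aux (Q := Qᵀ) (by simpa using hQQ) h
    have e : Qᵀ * (Q * B * Qᵀ) * Qᵀᵀ = B := by
      rw [Matrix.transpose_transpose]
      simp only [← Matrix.mul_assoc]
      rw [hQ, Matrix.one_mul, Matrix.mul_assoc, hQ, Matrix.mul_one]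
    rwa [e] at h2

/-- orthogonal-congruence reduction for the diagram
`(*−*,*)>*−*⋯`: the block matrix with corner `X` is positive definite iff the
block matrix with corner `X'` is. -/
theorem stmt12 {m : ℕ} (hm : 1 ≤ m) (Z : Matrix (Fin m) (Fin m) ℝ) (hZ : Z.IsSymm)
    (Y : Matrix (Fin 4) (Fin m) ℝ)
    (hY : ∀ i j, Y i j = if i.val = 3 ∧ j.val = 0 then -1 else 0) :
    (Matrix.fromBlocks
        !![2, -1, 0, 0; -1, 2, 0, -1; 0, 0, 2, -1; 0, -1, -1, 2]
        Y Yᵀ Z).PosDef ↔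
    (Matrix.fromBlocks
        !![2, -Real.sqrt (1/2), 0, 0;
           -Real.sqrt (1/2), 2, -Real.sqrt (1/2), 0;
           0, -Real.sqrt (1/2), 2, -Real.sqrt 2;
           0, 0, -Real.sqrt 2, 2]
        Y Yᵀ Z).PosDef := by
  have hs2 : Real.sqrt (1/2) * Real.sqrt (1/2) = 1/2 := Real.mul_self_sqrt (by norm_num)
  have ht : Real.sqrt 2 = 2 * Real.sqrt (1/2) := by
    rw [show (2:ℝ) = 4 * (1/2) by norm_num, Real.sqrt_mul (by norm_num),
      show (4:ℝ) = 2^2 by norm_num, Real.sqrt_sq (by norm_num)]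
    norm_num
  set s : ℝ := Real.sqrt (1/2)
  let P : Matrix (Fin 4) (Fin 4) ℝ := !![0, s, -s, 0; 1, 0, 0, 0; 0, s, s, 0; 0, 0, 0, 1]
  let Pt : Matrix (Fin 4) (Fin 4) ℝ := !![0, 1, 0, 0; s, 0, s, 0; -s, 0, s, 0; 0, 0, 0, 1]
  have hPt : Pᵀ = Pt := by
    ext i j
    fin_cases i <;> fin_cases j <;> simp [P, Pt, Matrix.vecHead, Matrix.vecTail, Function.comp]
  have hPo : Pᵀ * P = 1 := by
    rw [hPt]
    ext i j
    fin_cases i <;> fin_cases j <;>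
      simp [P, Pt, Matrix.mul_apply, Fin.sum_univ_four, Matrix.one_apply,
        Matrix.vecHead, Matrix.vecTail, Function.comp] <;> nlinarith [hs2]
  have hY0 : ∀ j, Y 0 j = 0 := by intro j; rw [hY]; simp
  have hY1 : ∀ j, Y 1 j = 0 := by intro j; rw [hY]; simp
  have hY2 : ∀ j, Y 2 j = 0 := by intro j; rw [hY]; simp
  have hPY : P * Y = Y := by
    ext i j
    rw [Matrix.mul_apply, Fin.sum_univ_four, hY0, hY1, hY2]
    fin_cases i <;> simp [P, hY0, hY1, hY2]
  have hPXP : P * !![2, -1, 0, 0; -1, 2, 0, -1; 0, 0, 2, -1; 0, -1, -1, 2] * Pᵀ =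
      !![2, -s, 0, 0; -s, 2, -s, 0; 0, -s, 2, -Real.sqrt 2; 0, 0, -Real.sqrt 2, 2] := by
    rw [hPt]
    ext i j
    fin_cases i <;> fin_cases j <;>
      simp [P, Pt, Matrix.mul_apply, Fin.sum_univ_four, ht,
        Matrix.vecHead, Matrix.vecTail, Function.comp] <;> nlinarith [hs2]
  set Q : Matrix (Fin 4 ⊕ Fin m) (Fin 4 ⊕ Fin m) ℝ :=
    Matrix.fromBlocks P 0 0 (1 : Matrix (Fin m) (Fin m) ℝ) with hQ
  have hQt : Qᵀ = Matrix.fromBlocks Pᵀ 0 0 1 := by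
    simp [hQ, Matrix.fromBlocks_transpose]
  have hQo : Qᵀ * Q = 1 := by
    rw [hQt, hQ, Matrix.fromBlocks_multiply]
    simp [hPo, Matrix.fromBlocks_one]
  have hYtP : Yᵀ * Pᵀ = Yᵀ := by rw [← Matrix.transpose_mul, hPY]
  rw [posDef_congr_iff hQo, hQ, hQt, Matrix.fromBlocks_multiply, Matrix.fromBlocks_multiply]
  simp only [Matrix.mul_one, Matrix.one_mul, Matrix.zero_mul, Matrix.mul_zero,
    add_zero, zero_add, hPY, hYtP, Matrix.mul_assoc]
  rw [← Matrix.mul_assoc, hPXP]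
end

section
/- For l ≥ 4, let T be a real symmetric tridiagonal l×l matrix with T i i = 2 for all i, (T 2 1)^2 = 1/2, (T 3 2)^2 = 1/2, (T 4 3)^2 = 2, and (T i (i−1))^2 = 1 for 5 ≤ i ≤ l. Then the leading principal minor of T of order 2 equals 7/2, the leading principal minor of order i equals 9 − i for every 3 ≤ i ≤ l, and T is positive definite if and only if l ≤ 8. -/
set_option maxHeartbeats 10000000
set_option maxRecDepth 4000

lemma det_step {n : ℕ} (M : Matrix (Fin (n+2)) (Fin (n+2)) ℝ)
    (hrow : ∀ j : Fin (n+2), j.val + 2 ≤ n + 1 → M (Fin.last (n+1)) j = 0)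
    (hcol : ∀ i : Fin (n+2), i.val + 2 ≤ n + 1 → M i (Fin.last (n+1)) = 0) :
    M.det = M (Fin.last (n+1)) (Fin.last (n+1)) * (M.submatrix Fin.castSucc Fin.castSucc).det
      - M (Fin.last (n+1)) ⟨n, by omega⟩ * M ⟨n, by omega⟩ (Fin.last (n+1)) *
        (M.submatrix (fun i : Fin n => i.castSucc.castSucc) (fun i : Fin n => i.castSucc.castSucc)).det := by
  have hpair : ((⟨n, by omega⟩ : Fin (n+2)) ≠ Fin.last (n+1)) := by
    simp [Fin.ext_iff, Fin.last]
  rw [Matrix.det_succ_row M (Fin.last (n+1))]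
  rw [← Finset.sum_subset (Finset.subset_univ {(⟨n, by omega⟩ : Fin (n+2)), Fin.last (n+1)})
    (by
      intro j _ hj
      simp only [Finset.mem_insert, Finset.mem_singleton] at hj
      push_neg at hj
      have : j.val + 2 ≤ n + 1 := by
        have h1 : j.val ≠ n := fun h => hj.1 (Fin.ext h)
        have h2 : j.val ≠ n + 1 := fun h => hj.2 (Fin.ext h)
        omega
      simp [hrow j this])]
  rw [Finset.sum_pair hpair]
  -- compute the minor at column ⟨n⟩
  set N := M.submatrix (Fin.last (n+1)).succAbove ((⟨n, by omega⟩ : Fin (n+2)).succAbove) with hN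
  have hsa : ((⟨n, by omega⟩ : Fin (n+2)).succAbove (Fin.last n)) = Fin.last (n+1) := by
    simp [Fin.succAbove, Fin.lt_def, Fin.ext_iff, Fin.last]
  have hsa2 : ∀ b : Fin n, ((⟨n, by omega⟩ : Fin (n+2)).succAbove (Fin.castSucc b)) = b.castSucc.castSucc := by
    intro b
    have : ((b.castSucc).castSucc : Fin (n+2)) < ⟨n, by omega⟩ := by
      simp only [Fin.lt_def, Fin.coe_castSucc, Fin.val_mk]; exact b.isLt
    simp [Fin.succAbove, this]
  have hNdet : N.det = M ⟨n, by omega⟩ (Fin.last (n+1)) *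
      (M.submatrix (fun i : Fin n => i.castSucc.castSucc) (fun i : Fin n => i.castSucc.castSucc)).det := by
    rcases n with _ | m
    · rw [show N.det = N 0 0 from Matrix.det_fin_one N]
      rw [show (M.submatrix (fun i : Fin 0 => i.castSucc.castSucc) (fun i : Fin 0 => i.castSucc.castSucc)).det = 1
        from Matrix.det_fin_zero]
      rw [mul_one, hN]
      simp only [Matrix.submatrix_apply, Fin.succAbove_last]
      rw [show ((⟨0, by omega⟩ : Fin 2).succAbove 0) = Fin.last 1 from hsa]
      rfl
    · rw [Matrix.det_succ_column N (Fin.last (m+1))]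
      rw [Finset.sum_eq_single (Fin.last (m+1))]
      · rw [hN]
        simp only [Matrix.submatrix_apply, Fin.succAbove_last, hsa, Fin.val_last]
        rw [show ((-1 : ℝ) ^ ((m+1) + (m+1))) = 1 from Even.neg_one_pow ⟨m+1, rfl⟩]
        rw [show Fin.castSucc (Fin.last (m+1)) = (⟨m+1, by omega⟩ : Fin (m+3)) from rfl]
        rw [one_mul]
        rw [Matrix.submatrix_submatrix]
        rw [show ((⟨m+1, by omega⟩ : Fin (m+3)).succAbove ∘ Fin.castSucc : Fin (m+1) → Fin (m+3))
              = (fun i : Fin (m+1) => i.castSucc.castSucc) from funext hsa2]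
        rfl
      · intro i _ hi
        have : N i (Fin.last (m+1)) = 0 := by
          rw [hN]
          simp only [Matrix.submatrix_apply, Fin.succAbove_last, hsa]
          apply hcol
          have : i.val < m + 1 := by
            rcases lt_or_eq_of_le (Nat.lt_succ_iff.mp i.isLt) with h | h
            · exact h
            · exact absurd (Fin.ext h) hi
          simpa using by omega
        simp [this]
      · simp
  rw [hNdet, Fin.succAbove_last]
  simp only [Fin.val_last, Fin.val_mk]
  rw [show ((-1:ℝ) ^ ((n+1)+(n+1))) = 1 from Even.neg_one_pow ⟨n+1, rfl⟩]
  rw [show ((-1:ℝ) ^ ((n+1)+n)) = -1 from Odd.neg_one_pow ⟨n, by ring⟩]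
  ring

lemma mydet_pos {m : ℕ} {M : Matrix (Fin m) (Fin m) ℝ} (h : M.PosDef) : 0 < M.det :=
  h.det_pos

lemma posdef_castLE {l m : ℕ} (T : Matrix (Fin l) (Fin l) ℝ) (hml : m ≤ l) (hT : T.PosDef) :
    (T.submatrix (Fin.castLE hml) (Fin.castLE hml)).PosDef := by
  refine Matrix.posDef_iff_dotProduct_mulVec.mpr ⟨hT.1.submatrix _, ?_⟩
  intro x hx
  classical
  set y : Fin l → ℝ := fun j => if hj : j.val < m then x ⟨j.val, hj⟩ else 0 with hy
  have key : ∀ f : Fin l → ℝ, (∑ j, y j * f j) = ∑ i, x i * f (Fin.castLE hml i) := by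
    intro f
    have vanish : ∀ j ∈ Finset.univ,
        j ∉ Finset.univ.map ⟨Fin.castLE hml, Fin.castLE_injective hml⟩ → y j * f j = 0 := by
      intro j _ hj
      have : ¬ j.val < m := by
        intro hjm
        exact hj (Finset.mem_map.mpr ⟨⟨j.val, hjm⟩, Finset.mem_univ _, Fin.ext rfl⟩)
      simp [hy, this]
    calc (∑ j, y j * f j)
        = ∑ j ∈ Finset.univ.map ⟨Fin.castLE hml, Fin.castLE_injective hml⟩, y j * f j :=
          (Finset.sum_subset (Finset.subset_univ _) vanish).symm
      _ = ∑ i, y (Fin.castLE hml i) * f (Fin.castLE hml i) := Finset.sum_map _ _ _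
      _ = ∑ i, x i * f (Fin.castLE hml i) := by
          apply Finset.sum_congr rfl
          intro i _
          congr 1
          simp [hy]
  have hy0 : y ≠ 0 := by
    obtain ⟨i, hi⟩ := Function.ne_iff.mp hx
    intro h0
    apply hi
    have := congrFun h0 (Fin.castLE hml i)
    simpa [hy] using this
  have hpos := (Matrix.posDef_iff_dotProduct_mulVec.mp hT).2 hy0
  have expand : dotProduct (star y) (T.mulVec y)
      = dotProduct (star x) ((T.submatrix (Fin.castLE hml) (Fin.castLE hml)).mulVec x) := by
    simp only [dotProduct, Matrix.mulVec, Pi.star_apply, star_trivial,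
      Matrix.submatrix_apply]
    rw [key (fun j => ∑ k, T j k * y k)]
    apply Finset.sum_congr rfl
    intro i _
    congr 1
    have := key (fun k => T (Fin.castLE hml i) k)
    calc (∑ k, T (Fin.castLE hml i) k * y k)
        = ∑ k, y k * T (Fin.castLE hml i) k := by simp [mul_comm]
      _ = ∑ j, x j * T (Fin.castLE hml i) (Fin.castLE hml j) := key _
      _ = ∑ j, T (Fin.castLE hml i) (Fin.castLE hml j) * x j := by simp [mul_comm]
  rw [← expand]
  exact hpos

theorem stmt13 {l : ℕ} (hl : 4 ≤ l) (T : Matrix (Fin l) (Fin l) ℝ)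
    (hsymm : T.IsSymm) (hdiag : ∀ i, T i i = 2)
    (htri : ∀ i j : Fin l, i.val + 2 ≤ j.val ∨ j.val + 2 ≤ i.val → T i j = 0)
    (h21 : (T ⟨1, by omega⟩ ⟨0, by omega⟩) ^ 2 = 1 / 2)
    (h32 : (T ⟨2, by omega⟩ ⟨1, by omega⟩) ^ 2 = 1 / 2)
    (h43 : (T ⟨3, by omega⟩ ⟨2, by omega⟩) ^ 2 = 2)
    (hrest : ∀ i : ℕ, ∀ _ : 5 ≤ i, ∀ _ : i ≤ l,
      (T ⟨i - 1, by omega⟩ ⟨i - 2, by omega⟩) ^ 2 = 1) :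
    (T.submatrix (Fin.castLE (show 2 ≤ l by omega))
      (Fin.castLE (show 2 ≤ l by omega))).det = 7 / 2 ∧
    (∀ i : ℕ, ∀ _ : 3 ≤ i, ∀ hil : i ≤ l,
      (T.submatrix (Fin.castLE hil) (Fin.castLE hil)).det = 9 - (i : ℝ)) ∧
    (T.PosDef ↔ l ≤ 8) := by
  have D1 : ∀ h : 1 ≤ l, (T.submatrix (Fin.castLE h) (Fin.castLE h)).det = 2 := by
    intro h
    rw [Matrix.det_fin_one, Matrix.submatrix_apply]
    exact hdiag _
  have D2 : ∀ h : 2 ≤ l, (T.submatrix (Fin.castLE h) (Fin.castLE h)).det = 7/2 := by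
    intro h
    rw [Matrix.det_fin_two]
    simp only [Matrix.submatrix_apply]
    rw [hsymm.apply (Fin.castLE h 1) (Fin.castLE h 0)]
    rw [hdiag, hdiag]
    rw [show T (Fin.castLE h 1) (Fin.castLE h 0) = T ⟨1, by omega⟩ ⟨0, by omega⟩ from rfl]
    linear_combination - h21
  have step : ∀ n : ℕ, ∀ h : n + 3 ≤ l,
      (T.submatrix (Fin.castLE h) (Fin.castLE h)).det
        = 2 * (T.submatrix (Fin.castLE (show n+2 ≤ l by omega))
            (Fin.castLE (show n+2 ≤ l by omega))).det
          - (T ⟨n+2, by omega⟩ ⟨n+1, by omega⟩)^2 *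
            (T.submatrix (Fin.castLE (show n+1 ≤ l by omega))
              (Fin.castLE (show n+1 ≤ l by omega))).det := by
    intro n h
    have hM := det_step (n := n+1) (T.submatrix (Fin.castLE h) (Fin.castLE h))
      (by
        intro j hj
        rw [Matrix.submatrix_apply]
        exact htri _ _ (Or.inr (by simpa using by omega)))
      (by
        intro i hi
        rw [Matrix.submatrix_apply]
        exact htri _ _ (Or.inl (by simpa using by omega)))
    rw [show ((T.submatrix (Fin.castLE h) (Fin.castLE h)).submatrix Fin.castSucc Fin.castSucc)
        = T.submatrix (Fin.castLE (show n+2 ≤ l by omega)) (Fin.castLE (show n+2 ≤ l by omega)) from rfl] at hM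
    rw [show ((T.submatrix (Fin.castLE h) (Fin.castLE h)).submatrix
          (fun i : Fin (n+1) => i.castSucc.castSucc) (fun i : Fin (n+1) => i.castSucc.castSucc))
        = T.submatrix (Fin.castLE (show n+1 ≤ l by omega)) (Fin.castLE (show n+1 ≤ l by omega)) from rfl] at hM
    rw [Matrix.submatrix_apply, Matrix.submatrix_apply, Matrix.submatrix_apply] at hM
    rw [show (Fin.castLE h (Fin.last (n+2))) = (⟨n+2, by omega⟩ : Fin l) from rfl] at hM
    rw [show (Fin.castLE h ⟨n+1, by omega⟩) = (⟨n+1, by omega⟩ : Fin l) from rfl] at hM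
    rw [hdiag] at hM
    rw [hsymm.apply (⟨n+2, by omega⟩ : Fin l) (⟨n+1, by omega⟩ : Fin l)] at hM
    rw [hM]; ring
  have main2 : ∀ i : ℕ, 3 ≤ i → ∀ hil : i ≤ l,
      (T.submatrix (Fin.castLE hil) (Fin.castLE hil)).det = 9 - (i : ℝ) := by
    intro i
    induction i using Nat.strong_induction_on with
    | _ i ih =>
      intro h3 hil
      match i, h3 with
      | 3, _ =>
        rw [step 0 hil, D2, D1]
        rw [show (T ⟨0+2, by omega⟩ ⟨0+1, by omega⟩) = T ⟨2, by omega⟩ ⟨1, by omega⟩ from rfl]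
        rw [h32]; norm_num
      | 4, _ =>
        rw [step 1 hil, ih 3 (by omega) (by omega) (by omega), D2]
        rw [show (T ⟨1+2, by omega⟩ ⟨1+1, by omega⟩) = T ⟨3, by omega⟩ ⟨2, by omega⟩ from rfl]
        rw [h43]; norm_num
      | (m+5), _ =>
        rw [step (m+2) hil, ih (m+4) (by omega) (by omega) (by omega),
          ih (m+3) (by omega) (by omega) (by omega)]
        have hc : (T ⟨m+2+2, by omega⟩ ⟨m+2+1, by omega⟩)^2 = 1 := by
          have := hrest (m+5) (by omega) (by omega)
          convert this using 3 <;> exact Fin.ext (by simp only [Fin.val_mk]; omega)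
        rw [hc]
        push_cast; ring
  refine ⟨D2 _, main2, ?_⟩
  constructor
  · intro hpd
    by_contra h8
    push_neg at h8
    have h9 : 9 ≤ l := h8
    have hdet := mydet_pos (posdef_castLE (m := 9) T h9 hpd)
    have h0 := main2 9 (by omega) h9
    norm_num at h0
    exact absurd h0 hdet.ne'
  · intro h8
    interval_cases l
    · refine Matrix.posDef_iff_dotProduct_mulVec.mpr ⟨?_, ?_⟩
      · ext i j
        simp only [Matrix.conjTranspose_apply, star_trivial]
        exact hsymm.apply i j
      · intro x hx
        have hsq0 : (T 1 0) ^ 2 = 1/2 := h21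
        have hsq1 : (T 2 1) ^ 2 = 1/2 := h32
        have hsq2 : (T 3 2) ^ 2 = 2 := h43
        have s0 : T 0 1 = T 1 0 := hsymm.apply 1 0
        have s1 : T 1 2 = T 2 1 := hsymm.apply 2 1
        have s2 : T 2 3 = T 3 2 := hsymm.apply 3 2
        have z02 : T 0 2 = 0 := htri 0 2 (by decide)
        have z03 : T 0 3 = 0 := htri 0 3 (by decide)
        have z13 : T 1 3 = 0 := htri 1 3 (by decide)
        have z20 : T 2 0 = 0 := htri 2 0 (by decide)
        have z30 : T 3 0 = 0 := htri 3 0 (by decide)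
        have z31 : T 3 1 = 0 := htri 3 1 (by decide)
        have key : dotProduct (star x) (T.mulVec x) =
            2*(x 0 + 1/2 * T 1 0 * x 1)^2 + 7/4*(x 1 + 4/7 * T 2 1 * x 2)^2 + 12/7*(x 2 + 7/12 * T 3 2 * x 3)^2 + 5/6*(x 3)^2 := by
          simp only [dotProduct, Matrix.mulVec, Pi.star_apply, star_trivial,
            Fin.sum_univ_four]
          rw [hdiag 0, hdiag 1, hdiag 2, hdiag 3, z02, z03, z13, z20, z30, z31, s0, s1, s2]
          linear_combination (-(x 1)^2*(1/2)) * hsq0 + (-(x 2)^2*(4/7)) * hsq1 + (-(x 3)^2*(7/12)) * hsq2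
        by_contra hc
        push_neg at hc
        rw [key] at hc
        have q3 : (x 3)^2 ≤ 0 := by
          linarith [sq_nonneg (x 0 + 1/2 * T 1 0 * x 1), sq_nonneg (x 1 + 4/7 * T 2 1 * x 2), sq_nonneg (x 2 + 7/12 * T 3 2 * x 3)]
        have e3 : x 3 = 0 := sq_eq_zero_iff.mp (le_antisymm q3 (sq_nonneg _))
        have q2 : (x 2 + 7/12 * T 3 2 * x 3)^2 ≤ 0 := by
          linarith [sq_nonneg (x 0 + 1/2 * T 1 0 * x 1), sq_nonneg (x 1 + 4/7 * T 2 1 * x 2), sq_nonneg (x 3)]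
        have e2 : x 2 = 0 := by
          have := sq_eq_zero_iff.mp (le_antisymm q2 (sq_nonneg _))
          rw [e3] at this; linarith
        have q1 : (x 1 + 4/7 * T 2 1 * x 2)^2 ≤ 0 := by
          linarith [sq_nonneg (x 0 + 1/2 * T 1 0 * x 1), sq_nonneg (x 2 + 7/12 * T 3 2 * x 3), sq_nonneg (x 3)]
        have e1 : x 1 = 0 := by
          have := sq_eq_zero_iff.mp (le_antisymm q1 (sq_nonneg _))
          rw [e2] at this; linarith
        have q0 : (x 0 + 1/2 * T 1 0 * x 1)^2 ≤ 0 := by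
          linarith [sq_nonneg (x 1 + 4/7 * T 2 1 * x 2), sq_nonneg (x 2 + 7/12 * T 3 2 * x 3), sq_nonneg (x 3)]
        have e0 : x 0 = 0 := by
          have := sq_eq_zero_iff.mp (le_antisymm q0 (sq_nonneg _))
          rw [e1] at this; linarith
        exact hx (funext fun i => by fin_cases i <;> assumption)
    · refine Matrix.posDef_iff_dotProduct_mulVec.mpr ⟨?_, ?_⟩
      · ext i j
        simp only [Matrix.conjTranspose_apply, star_trivial]
        exact hsymm.apply i j
      · intro x hx
        have hsq0 : (T 1 0) ^ 2 = 1/2 := h21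
        have hsq1 : (T 2 1) ^ 2 = 1/2 := h32
        have hsq2 : (T 3 2) ^ 2 = 2 := h43
        have hsq3 : (T 4 3) ^ 2 = 1 := hrest 5 (by omega) (by omega)
        have s0 : T 0 1 = T 1 0 := hsymm.apply 1 0
        have s1 : T 1 2 = T 2 1 := hsymm.apply 2 1
        have s2 : T 2 3 = T 3 2 := hsymm.apply 3 2
        have s3 : T 3 4 = T 4 3 := hsymm.apply 4 3
        have z02 : T 0 2 = 0 := htri 0 2 (by decide)
        have z03 : T 0 3 = 0 := htri 0 3 (by decide)
        have z04 : T 0 4 = 0 := htri 0 4 (by decide)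
        have z13 : T 1 3 = 0 := htri 1 3 (by decide)
        have z14 : T 1 4 = 0 := htri 1 4 (by decide)
        have z20 : T 2 0 = 0 := htri 2 0 (by decide)
        have z24 : T 2 4 = 0 := htri 2 4 (by decide)
        have z30 : T 3 0 = 0 := htri 3 0 (by decide)
        have z31 : T 3 1 = 0 := htri 3 1 (by decide)
        have z40 : T 4 0 = 0 := htri 4 0 (by decide)
        have z41 : T 4 1 = 0 := htri 4 1 (by decide)
        have z42 : T 4 2 = 0 := htri 4 2 (by decide)
        have key : dotProduct (star x) (T.mulVec x) =
            2*(x 0 + 1/2 * T 1 0 * x 1)^2 + 7/4*(x 1 + 4/7 * T 2 1 * x 2)^2 + 12/7*(x 2 + 7/12 * T 3 2 * x 3)^2 + 5/6*(x 3 + 6/5 * T 4 3 * x 4)^2 + 4/5*(x 4)^2 := by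
          simp only [dotProduct, Matrix.mulVec, Pi.star_apply, star_trivial,
            Fin.sum_univ_five]
          rw [hdiag 0, hdiag 1, hdiag 2, hdiag 3, hdiag 4, z02, z03, z04, z13, z14, z20, z24, z30, z31, z40, z41, z42, s0, s1, s2, s3]
          linear_combination (-(x 1)^2*(1/2)) * hsq0 + (-(x 2)^2*(4/7)) * hsq1 + (-(x 3)^2*(7/12)) * hsq2 + (-(x 4)^2*(6/5)) * hsq3
        by_contra hc
        push_neg at hc
        rw [key] at hc
        have q4 : (x 4)^2 ≤ 0 := by
          linarith [sq_nonneg (x 0 + 1/2 * T 1 0 * x 1), sq_nonneg (x 1 + 4/7 * T 2 1 * x 2), sq_nonneg (x 2 + 7/12 * T 3 2 * x 3), sq_nonneg (x 3 + 6/5 * T 4 3 * x 4)]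
        have e4 : x 4 = 0 := sq_eq_zero_iff.mp (le_antisymm q4 (sq_nonneg _))
        have q3 : (x 3 + 6/5 * T 4 3 * x 4)^2 ≤ 0 := by
          linarith [sq_nonneg (x 0 + 1/2 * T 1 0 * x 1), sq_nonneg (x 1 + 4/7 * T 2 1 * x 2), sq_nonneg (x 2 + 7/12 * T 3 2 * x 3), sq_nonneg (x 4)]
        have e3 : x 3 = 0 := by
          have := sq_eq_zero_iff.mp (le_antisymm q3 (sq_nonneg _))
          rw [e4] at this; linarith
        have q2 : (x 2 + 7/12 * T 3 2 * x 3)^2 ≤ 0 := by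
          linarith [sq_nonneg (x 0 + 1/2 * T 1 0 * x 1), sq_nonneg (x 1 + 4/7 * T 2 1 * x 2), sq_nonneg (x 3 + 6/5 * T 4 3 * x 4), sq_nonneg (x 4)]
        have e2 : x 2 = 0 := by
          have := sq_eq_zero_iff.mp (le_antisymm q2 (sq_nonneg _))
          rw [e3] at this; linarith
        have q1 : (x 1 + 4/7 * T 2 1 * x 2)^2 ≤ 0 := by
          linarith [sq_nonneg (x 0 + 1/2 * T 1 0 * x 1), sq_nonneg (x 2 + 7/12 * T 3 2 * x 3), sq_nonneg (x 3 + 6/5 * T 4 3 * x 4), sq_nonneg (x 4)]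
        have e1 : x 1 = 0 := by
          have := sq_eq_zero_iff.mp (le_antisymm q1 (sq_nonneg _))
          rw [e2] at this; linarith
        have q0 : (x 0 + 1/2 * T 1 0 * x 1)^2 ≤ 0 := by
          linarith [sq_nonneg (x 1 + 4/7 * T 2 1 * x 2), sq_nonneg (x 2 + 7/12 * T 3 2 * x 3), sq_nonneg (x 3 + 6/5 * T 4 3 * x 4), sq_nonneg (x 4)]
        have e0 : x 0 = 0 := by
          have := sq_eq_zero_iff.mp (le_antisymm q0 (sq_nonneg _))
          rw [e1] at this; linarith
        exact hx (funext fun i => by fin_cases i <;> assumption)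
    · refine Matrix.posDef_iff_dotProduct_mulVec.mpr ⟨?_, ?_⟩
      · ext i j
        simp only [Matrix.conjTranspose_apply, star_trivial]
        exact hsymm.apply i j
      · intro x hx
        have hsq0 : (T 1 0) ^ 2 = 1/2 := h21
        have hsq1 : (T 2 1) ^ 2 = 1/2 := h32
        have hsq2 : (T 3 2) ^ 2 = 2 := h43
        have hsq3 : (T 4 3) ^ 2 = 1 := hrest 5 (by omega) (by omega)
        have hsq4 : (T 5 4) ^ 2 = 1 := hrest 6 (by omega) (by omega)
        have s0 : T 0 1 = T 1 0 := hsymm.apply 1 0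
        have s1 : T 1 2 = T 2 1 := hsymm.apply 2 1
        have s2 : T 2 3 = T 3 2 := hsymm.apply 3 2
        have s3 : T 3 4 = T 4 3 := hsymm.apply 4 3
        have s4 : T 4 5 = T 5 4 := hsymm.apply 5 4
        have z02 : T 0 2 = 0 := htri 0 2 (by decide)
        have z03 : T 0 3 = 0 := htri 0 3 (by decide)
        have z04 : T 0 4 = 0 := htri 0 4 (by decide)
        have z05 : T 0 5 = 0 := htri 0 5 (by decide)
        have z13 : T 1 3 = 0 := htri 1 3 (by decide)
        have z14 : T 1 4 = 0 := htri 1 4 (by decide)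
        have z15 : T 1 5 = 0 := htri 1 5 (by decide)
        have z20 : T 2 0 = 0 := htri 2 0 (by decide)
        have z24 : T 2 4 = 0 := htri 2 4 (by decide)
        have z25 : T 2 5 = 0 := htri 2 5 (by decide)
        have z30 : T 3 0 = 0 := htri 3 0 (by decide)
        have z31 : T 3 1 = 0 := htri 3 1 (by decide)
        have z35 : T 3 5 = 0 := htri 3 5 (by decide)
        have z40 : T 4 0 = 0 := htri 4 0 (by decide)
        have z41 : T 4 1 = 0 := htri 4 1 (by decide)
        have z42 : T 4 2 = 0 := htri 4 2 (by decide)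
        have z50 : T 5 0 = 0 := htri 5 0 (by decide)
        have z51 : T 5 1 = 0 := htri 5 1 (by decide)
        have z52 : T 5 2 = 0 := htri 5 2 (by decide)
        have z53 : T 5 3 = 0 := htri 5 3 (by decide)
        have key : dotProduct (star x) (T.mulVec x) =
            2*(x 0 + 1/2 * T 1 0 * x 1)^2 + 7/4*(x 1 + 4/7 * T 2 1 * x 2)^2 + 12/7*(x 2 + 7/12 * T 3 2 * x 3)^2 + 5/6*(x 3 + 6/5 * T 4 3 * x 4)^2 + 4/5*(x 4 + 5/4 * T 5 4 * x 5)^2 + 3/4*(x 5)^2 := by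
          simp only [dotProduct, Matrix.mulVec, Pi.star_apply, star_trivial,
            Fin.sum_univ_six]
          rw [hdiag 0, hdiag 1, hdiag 2, hdiag 3, hdiag 4, hdiag 5, z02, z03, z04, z05, z13, z14, z15, z20, z24, z25, z30, z31, z35, z40, z41, z42, z50, z51, z52, z53, s0, s1, s2, s3, s4]
          linear_combination (-(x 1)^2*(1/2)) * hsq0 + (-(x 2)^2*(4/7)) * hsq1 + (-(x 3)^2*(7/12)) * hsq2 + (-(x 4)^2*(6/5)) * hsq3 + (-(x 5)^2*(5/4)) * hsq4
        by_contra hc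
        push_neg at hc
        rw [key] at hc
        have q5 : (x 5)^2 ≤ 0 := by
          linarith [sq_nonneg (x 0 + 1/2 * T 1 0 * x 1), sq_nonneg (x 1 + 4/7 * T 2 1 * x 2), sq_nonneg (x 2 + 7/12 * T 3 2 * x 3), sq_nonneg (x 3 + 6/5 * T 4 3 * x 4), sq_nonneg (x 4 + 5/4 * T 5 4 * x 5)]
        have e5 : x 5 = 0 := sq_eq_zero_iff.mp (le_antisymm q5 (sq_nonneg _))
        have q4 : (x 4 + 5/4 * T 5 4 * x 5)^2 ≤ 0 := by
          linarith [sq_nonneg (x 0 + 1/2 * T 1 0 * x 1), sq_nonneg (x 1 + 4/7 * T 2 1 * x 2), sq_nonneg (x 2 + 7/12 * T 3 2 * x 3), sq_nonneg (x 3 + 6/5 * T 4 3 * x 4), sq_nonneg (x 5)]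
        have e4 : x 4 = 0 := by
          have := sq_eq_zero_iff.mp (le_antisymm q4 (sq_nonneg _))
          rw [e5] at this; linarith
        have q3 : (x 3 + 6/5 * T 4 3 * x 4)^2 ≤ 0 := by
          linarith [sq_nonneg (x 0 + 1/2 * T 1 0 * x 1), sq_nonneg (x 1 + 4/7 * T 2 1 * x 2), sq_nonneg (x 2 + 7/12 * T 3 2 * x 3), sq_nonneg (x 4 + 5/4 * T 5 4 * x 5), sq_nonneg (x 5)]
        have e3 : x 3 = 0 := by
          have := sq_eq_zero_iff.mp (le_antisymm q3 (sq_nonneg _))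
          rw [e4] at this; linarith
        have q2 : (x 2 + 7/12 * T 3 2 * x 3)^2 ≤ 0 := by
          linarith [sq_nonneg (x 0 + 1/2 * T 1 0 * x 1), sq_nonneg (x 1 + 4/7 * T 2 1 * x 2), sq_nonneg (x 3 + 6/5 * T 4 3 * x 4), sq_nonneg (x 4 + 5/4 * T 5 4 * x 5), sq_nonneg (x 5)]
        have e2 : x 2 = 0 := by
          have := sq_eq_zero_iff.mp (le_antisymm q2 (sq_nonneg _))
          rw [e3] at this; linarith
        have q1 : (x 1 + 4/7 * T 2 1 * x 2)^2 ≤ 0 := by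
          linarith [sq_nonneg (x 0 + 1/2 * T 1 0 * x 1), sq_nonneg (x 2 + 7/12 * T 3 2 * x 3), sq_nonneg (x 3 + 6/5 * T 4 3 * x 4), sq_nonneg (x 4 + 5/4 * T 5 4 * x 5), sq_nonneg (x 5)]
        have e1 : x 1 = 0 := by
          have := sq_eq_zero_iff.mp (le_antisymm q1 (sq_nonneg _))
          rw [e2] at this; linarith
        have q0 : (x 0 + 1/2 * T 1 0 * x 1)^2 ≤ 0 := by
          linarith [sq_nonneg (x 1 + 4/7 * T 2 1 * x 2), sq_nonneg (x 2 + 7/12 * T 3 2 * x 3), sq_nonneg (x 3 + 6/5 * T 4 3 * x 4), sq_nonneg (x 4 + 5/4 * T 5 4 * x 5), sq_nonneg (x 5)]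
        have e0 : x 0 = 0 := by
          have := sq_eq_zero_iff.mp (le_antisymm q0 (sq_nonneg _))
          rw [e1] at this; linarith
        exact hx (funext fun i => by fin_cases i <;> assumption)
    · refine Matrix.posDef_iff_dotProduct_mulVec.mpr ⟨?_, ?_⟩
      · ext i j
        simp only [Matrix.conjTranspose_apply, star_trivial]
        exact hsymm.apply i j
      · intro x hx
        have hsq0 : (T 1 0) ^ 2 = 1/2 := h21
        have hsq1 : (T 2 1) ^ 2 = 1/2 := h32
        have hsq2 : (T 3 2) ^ 2 = 2 := h43
        have hsq3 : (T 4 3) ^ 2 = 1 := hrest 5 (by omega) (by omega)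
        have hsq4 : (T 5 4) ^ 2 = 1 := hrest 6 (by omega) (by omega)
        have hsq5 : (T 6 5) ^ 2 = 1 := hrest 7 (by omega) (by omega)
        have s0 : T 0 1 = T 1 0 := hsymm.apply 1 0
        have s1 : T 1 2 = T 2 1 := hsymm.apply 2 1
        have s2 : T 2 3 = T 3 2 := hsymm.apply 3 2
        have s3 : T 3 4 = T 4 3 := hsymm.apply 4 3
        have s4 : T 4 5 = T 5 4 := hsymm.apply 5 4
        have s5 : T 5 6 = T 6 5 := hsymm.apply 6 5
        have z02 : T 0 2 = 0 := htri 0 2 (by decide)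
        have z03 : T 0 3 = 0 := htri 0 3 (by decide)
        have z04 : T 0 4 = 0 := htri 0 4 (by decide)
        have z05 : T 0 5 = 0 := htri 0 5 (by decide)
        have z06 : T 0 6 = 0 := htri 0 6 (by decide)
        have z13 : T 1 3 = 0 := htri 1 3 (by decide)
        have z14 : T 1 4 = 0 := htri 1 4 (by decide)
        have z15 : T 1 5 = 0 := htri 1 5 (by decide)
        have z16 : T 1 6 = 0 := htri 1 6 (by decide)
        have z20 : T 2 0 = 0 := htri 2 0 (by decide)
        have z24 : T 2 4 = 0 := htri 2 4 (by decide)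
        have z25 : T 2 5 = 0 := htri 2 5 (by decide)
        have z26 : T 2 6 = 0 := htri 2 6 (by decide)
        have z30 : T 3 0 = 0 := htri 3 0 (by decide)
        have z31 : T 3 1 = 0 := htri 3 1 (by decide)
        have z35 : T 3 5 = 0 := htri 3 5 (by decide)
        have z36 : T 3 6 = 0 := htri 3 6 (by decide)
        have z40 : T 4 0 = 0 := htri 4 0 (by decide)
        have z41 : T 4 1 = 0 := htri 4 1 (by decide)
        have z42 : T 4 2 = 0 := htri 4 2 (by decide)
        have z46 : T 4 6 = 0 := htri 4 6 (by decide)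
        have z50 : T 5 0 = 0 := htri 5 0 (by decide)
        have z51 : T 5 1 = 0 := htri 5 1 (by decide)
        have z52 : T 5 2 = 0 := htri 5 2 (by decide)
        have z53 : T 5 3 = 0 := htri 5 3 (by decide)
        have z60 : T 6 0 = 0 := htri 6 0 (by decide)
        have z61 : T 6 1 = 0 := htri 6 1 (by decide)
        have z62 : T 6 2 = 0 := htri 6 2 (by decide)
        have z63 : T 6 3 = 0 := htri 6 3 (by decide)
        have z64 : T 6 4 = 0 := htri 6 4 (by decide)
        have key : dotProduct (star x) (T.mulVec x) =
            2*(x 0 + 1/2 * T 1 0 * x 1)^2 + 7/4*(x 1 + 4/7 * T 2 1 * x 2)^2 + 12/7*(x 2 + 7/12 * T 3 2 * x 3)^2 + 5/6*(x 3 + 6/5 * T 4 3 * x 4)^2 + 4/5*(x 4 + 5/4 * T 5 4 * x 5)^2 + 3/4*(x 5 + 4/3 * T 6 5 * x 6)^2 + 2/3*(x 6)^2 := by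
          simp only [dotProduct, Matrix.mulVec, Pi.star_apply, star_trivial,
            Fin.sum_univ_seven]
          rw [hdiag 0, hdiag 1, hdiag 2, hdiag 3, hdiag 4, hdiag 5, hdiag 6, z02, z03, z04, z05, z06, z13, z14, z15, z16, z20, z24, z25, z26, z30, z31, z35, z36, z40, z41, z42, z46, z50, z51, z52, z53, z60, z61, z62, z63, z64, s0, s1, s2, s3, s4, s5]
          linear_combination (-(x 1)^2*(1/2)) * hsq0 + (-(x 2)^2*(4/7)) * hsq1 + (-(x 3)^2*(7/12)) * hsq2 + (-(x 4)^2*(6/5)) * hsq3 + (-(x 5)^2*(5/4)) * hsq4 + (-(x 6)^2*(4/3)) * hsq5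
        by_contra hc
        push_neg at hc
        rw [key] at hc
        have q6 : (x 6)^2 ≤ 0 := by
          linarith [sq_nonneg (x 0 + 1/2 * T 1 0 * x 1), sq_nonneg (x 1 + 4/7 * T 2 1 * x 2), sq_nonneg (x 2 + 7/12 * T 3 2 * x 3), sq_nonneg (x 3 + 6/5 * T 4 3 * x 4), sq_nonneg (x 4 + 5/4 * T 5 4 * x 5), sq_nonneg (x 5 + 4/3 * T 6 5 * x 6)]
        have e6 : x 6 = 0 := sq_eq_zero_iff.mp (le_antisymm q6 (sq_nonneg _))
        have q5 : (x 5 + 4/3 * T 6 5 * x 6)^2 ≤ 0 := by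
          linarith [sq_nonneg (x 0 + 1/2 * T 1 0 * x 1), sq_nonneg (x 1 + 4/7 * T 2 1 * x 2), sq_nonneg (x 2 + 7/12 * T 3 2 * x 3), sq_nonneg (x 3 + 6/5 * T 4 3 * x 4), sq_nonneg (x 4 + 5/4 * T 5 4 * x 5), sq_nonneg (x 6)]
        have e5 : x 5 = 0 := by
          have := sq_eq_zero_iff.mp (le_antisymm q5 (sq_nonneg _))
          rw [e6] at this; linarith
        have q4 : (x 4 + 5/4 * T 5 4 * x 5)^2 ≤ 0 := by
          linarith [sq_nonneg (x 0 + 1/2 * T 1 0 * x 1), sq_nonneg (x 1 + 4/7 * T 2 1 * x 2), sq_nonneg (x 2 + 7/12 * T 3 2 * x 3), sq_nonneg (x 3 + 6/5 * T 4 3 * x 4), sq_nonneg (x 5 + 4/3 * T 6 5 * x 6), sq_nonneg (x 6)]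
        have e4 : x 4 = 0 := by
          have := sq_eq_zero_iff.mp (le_antisymm q4 (sq_nonneg _))
          rw [e5] at this; linarith
        have q3 : (x 3 + 6/5 * T 4 3 * x 4)^2 ≤ 0 := by
          linarith [sq_nonneg (x 0 + 1/2 * T 1 0 * x 1), sq_nonneg (x 1 + 4/7 * T 2 1 * x 2), sq_nonneg (x 2 + 7/12 * T 3 2 * x 3), sq_nonneg (x 4 + 5/4 * T 5 4 * x 5), sq_nonneg (x 5 + 4/3 * T 6 5 * x 6), sq_nonneg (x 6)]
        have e3 : x 3 = 0 := by
          have := sq_eq_zero_iff.mp (le_antisymm q3 (sq_nonneg _))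
          rw [e4] at this; linarith
        have q2 : (x 2 + 7/12 * T 3 2 * x 3)^2 ≤ 0 := by
          linarith [sq_nonneg (x 0 + 1/2 * T 1 0 * x 1), sq_nonneg (x 1 + 4/7 * T 2 1 * x 2), sq_nonneg (x 3 + 6/5 * T 4 3 * x 4), sq_nonneg (x 4 + 5/4 * T 5 4 * x 5), sq_nonneg (x 5 + 4/3 * T 6 5 * x 6), sq_nonneg (x 6)]
        have e2 : x 2 = 0 := by
          have := sq_eq_zero_iff.mp (le_antisymm q2 (sq_nonneg _))
          rw [e3] at this; linarith
        have q1 : (x 1 + 4/7 * T 2 1 * x 2)^2 ≤ 0 := by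
          linarith [sq_nonneg (x 0 + 1/2 * T 1 0 * x 1), sq_nonneg (x 2 + 7/12 * T 3 2 * x 3), sq_nonneg (x 3 + 6/5 * T 4 3 * x 4), sq_nonneg (x 4 + 5/4 * T 5 4 * x 5), sq_nonneg (x 5 + 4/3 * T 6 5 * x 6), sq_nonneg (x 6)]
        have e1 : x 1 = 0 := by
          have := sq_eq_zero_iff.mp (le_antisymm q1 (sq_nonneg _))
          rw [e2] at this; linarith
        have q0 : (x 0 + 1/2 * T 1 0 * x 1)^2 ≤ 0 := by
          linarith [sq_nonneg (x 1 + 4/7 * T 2 1 * x 2), sq_nonneg (x 2 + 7/12 * T 3 2 * x 3), sq_nonneg (x 3 + 6/5 * T 4 3 * x 4), sq_nonneg (x 4 + 5/4 * T 5 4 * x 5), sq_nonneg (x 5 + 4/3 * T 6 5 * x 6), sq_nonneg (x 6)]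
        have e0 : x 0 = 0 := by
          have := sq_eq_zero_iff.mp (le_antisymm q0 (sq_nonneg _))
          rw [e1] at this; linarith
        exact hx (funext fun i => by fin_cases i <;> assumption)
    · refine Matrix.posDef_iff_dotProduct_mulVec.mpr ⟨?_, ?_⟩
      · ext i j
        simp only [Matrix.conjTranspose_apply, star_trivial]
        exact hsymm.apply i j
      · intro x hx
        have hsq0 : (T 1 0) ^ 2 = 1/2 := h21
        have hsq1 : (T 2 1) ^ 2 = 1/2 := h32
        have hsq2 : (T 3 2) ^ 2 = 2 := h43
        have hsq3 : (T 4 3) ^ 2 = 1 := hrest 5 (by omega) (by omega)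
        have hsq4 : (T 5 4) ^ 2 = 1 := hrest 6 (by omega) (by omega)
        have hsq5 : (T 6 5) ^ 2 = 1 := hrest 7 (by omega) (by omega)
        have hsq6 : (T 7 6) ^ 2 = 1 := hrest 8 (by omega) (by omega)
        have s0 : T 0 1 = T 1 0 := hsymm.apply 1 0
        have s1 : T 1 2 = T 2 1 := hsymm.apply 2 1
        have s2 : T 2 3 = T 3 2 := hsymm.apply 3 2
        have s3 : T 3 4 = T 4 3 := hsymm.apply 4 3
        have s4 : T 4 5 = T 5 4 := hsymm.apply 5 4
        have s5 : T 5 6 = T 6 5 := hsymm.apply 6 5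
        have s6 : T 6 7 = T 7 6 := hsymm.apply 7 6
        have z02 : T 0 2 = 0 := htri 0 2 (by decide)
        have z03 : T 0 3 = 0 := htri 0 3 (by decide)
        have z04 : T 0 4 = 0 := htri 0 4 (by decide)
        have z05 : T 0 5 = 0 := htri 0 5 (by decide)
        have z06 : T 0 6 = 0 := htri 0 6 (by decide)
        have z07 : T 0 7 = 0 := htri 0 7 (by decide)
        have z13 : T 1 3 = 0 := htri 1 3 (by decide)
        have z14 : T 1 4 = 0 := htri 1 4 (by decide)
        have z15 : T 1 5 = 0 := htri 1 5 (by decide)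
        have z16 : T 1 6 = 0 := htri 1 6 (by decide)
        have z17 : T 1 7 = 0 := htri 1 7 (by decide)
        have z20 : T 2 0 = 0 := htri 2 0 (by decide)
        have z24 : T 2 4 = 0 := htri 2 4 (by decide)
        have z25 : T 2 5 = 0 := htri 2 5 (by decide)
        have z26 : T 2 6 = 0 := htri 2 6 (by decide)
        have z27 : T 2 7 = 0 := htri 2 7 (by decide)
        have z30 : T 3 0 = 0 := htri 3 0 (by decide)
        have z31 : T 3 1 = 0 := htri 3 1 (by decide)
        have z35 : T 3 5 = 0 := htri 3 5 (by decide)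
        have z36 : T 3 6 = 0 := htri 3 6 (by decide)
        have z37 : T 3 7 = 0 := htri 3 7 (by decide)
        have z40 : T 4 0 = 0 := htri 4 0 (by decide)
        have z41 : T 4 1 = 0 := htri 4 1 (by decide)
        have z42 : T 4 2 = 0 := htri 4 2 (by decide)
        have z46 : T 4 6 = 0 := htri 4 6 (by decide)
        have z47 : T 4 7 = 0 := htri 4 7 (by decide)
        have z50 : T 5 0 = 0 := htri 5 0 (by decide)
        have z51 : T 5 1 = 0 := htri 5 1 (by decide)
        have z52 : T 5 2 = 0 := htri 5 2 (by decide)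
        have z53 : T 5 3 = 0 := htri 5 3 (by decide)
        have z57 : T 5 7 = 0 := htri 5 7 (by decide)
        have z60 : T 6 0 = 0 := htri 6 0 (by decide)
        have z61 : T 6 1 = 0 := htri 6 1 (by decide)
        have z62 : T 6 2 = 0 := htri 6 2 (by decide)
        have z63 : T 6 3 = 0 := htri 6 3 (by decide)
        have z64 : T 6 4 = 0 := htri 6 4 (by decide)
        have z70 : T 7 0 = 0 := htri 7 0 (by decide)
        have z71 : T 7 1 = 0 := htri 7 1 (by decide)
        have z72 : T 7 2 = 0 := htri 7 2 (by decide)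
        have z73 : T 7 3 = 0 := htri 7 3 (by decide)
        have z74 : T 7 4 = 0 := htri 7 4 (by decide)
        have z75 : T 7 5 = 0 := htri 7 5 (by decide)
        have key : dotProduct (star x) (T.mulVec x) =
            2*(x 0 + 1/2 * T 1 0 * x 1)^2 + 7/4*(x 1 + 4/7 * T 2 1 * x 2)^2 + 12/7*(x 2 + 7/12 * T 3 2 * x 3)^2 + 5/6*(x 3 + 6/5 * T 4 3 * x 4)^2 + 4/5*(x 4 + 5/4 * T 5 4 * x 5)^2 + 3/4*(x 5 + 4/3 * T 6 5 * x 6)^2 + 2/3*(x 6 + 3/2 * T 7 6 * x 7)^2 + 1/2*(x 7)^2 := by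
          simp only [dotProduct, Matrix.mulVec, Pi.star_apply, star_trivial,
            Fin.sum_univ_eight]
          rw [hdiag 0, hdiag 1, hdiag 2, hdiag 3, hdiag 4, hdiag 5, hdiag 6, hdiag 7, z02, z03, z04, z05, z06, z07, z13, z14, z15, z16, z17, z20, z24, z25, z26, z27, z30, z31, z35, z36, z37, z40, z41, z42, z46, z47, z50, z51, z52, z53, z57, z60, z61, z62, z63, z64, z70, z71, z72, z73, z74, z75, s0, s1, s2, s3, s4, s5, s6]
          linear_combination (-(x 1)^2*(1/2)) * hsq0 + (-(x 2)^2*(4/7)) * hsq1 + (-(x 3)^2*(7/12)) * hsq2 + (-(x 4)^2*(6/5)) * hsq3 + (-(x 5)^2*(5/4)) * hsq4 + (-(x 6)^2*(4/3)) * hsq5 + (-(x 7)^2*(3/2)) * hsq6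
        by_contra hc
        push_neg at hc
        rw [key] at hc
        have q7 : (x 7)^2 ≤ 0 := by
          linarith [sq_nonneg (x 0 + 1/2 * T 1 0 * x 1), sq_nonneg (x 1 + 4/7 * T 2 1 * x 2), sq_nonneg (x 2 + 7/12 * T 3 2 * x 3), sq_nonneg (x 3 + 6/5 * T 4 3 * x 4), sq_nonneg (x 4 + 5/4 * T 5 4 * x 5), sq_nonneg (x 5 + 4/3 * T 6 5 * x 6), sq_nonneg (x 6 + 3/2 * T 7 6 * x 7)]
        have e7 : x 7 = 0 := sq_eq_zero_iff.mp (le_antisymm q7 (sq_nonneg _))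
        have q6 : (x 6 + 3/2 * T 7 6 * x 7)^2 ≤ 0 := by
          linarith [sq_nonneg (x 0 + 1/2 * T 1 0 * x 1), sq_nonneg (x 1 + 4/7 * T 2 1 * x 2), sq_nonneg (x 2 + 7/12 * T 3 2 * x 3), sq_nonneg (x 3 + 6/5 * T 4 3 * x 4), sq_nonneg (x 4 + 5/4 * T 5 4 * x 5), sq_nonneg (x 5 + 4/3 * T 6 5 * x 6), sq_nonneg (x 7)]
        have e6 : x 6 = 0 := by
          have := sq_eq_zero_iff.mp (le_antisymm q6 (sq_nonneg _))
          rw [e7] at this; linarith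
        have q5 : (x 5 + 4/3 * T 6 5 * x 6)^2 ≤ 0 := by
          linarith [sq_nonneg (x 0 + 1/2 * T 1 0 * x 1), sq_nonneg (x 1 + 4/7 * T 2 1 * x 2), sq_nonneg (x 2 + 7/12 * T 3 2 * x 3), sq_nonneg (x 3 + 6/5 * T 4 3 * x 4), sq_nonneg (x 4 + 5/4 * T 5 4 * x 5), sq_nonneg (x 6 + 3/2 * T 7 6 * x 7), sq_nonneg (x 7)]
        have e5 : x 5 = 0 := by
          have := sq_eq_zero_iff.mp (le_antisymm q5 (sq_nonneg _))
          rw [e6] at this; linarith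
        have q4 : (x 4 + 5/4 * T 5 4 * x 5)^2 ≤ 0 := by
          linarith [sq_nonneg (x 0 + 1/2 * T 1 0 * x 1), sq_nonneg (x 1 + 4/7 * T 2 1 * x 2), sq_nonneg (x 2 + 7/12 * T 3 2 * x 3), sq_nonneg (x 3 + 6/5 * T 4 3 * x 4), sq_nonneg (x 5 + 4/3 * T 6 5 * x 6), sq_nonneg (x 6 + 3/2 * T 7 6 * x 7), sq_nonneg (x 7)]
        have e4 : x 4 = 0 := by
          have := sq_eq_zero_iff.mp (le_antisymm q4 (sq_nonneg _))
          rw [e5] at this; linarith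
        have q3 : (x 3 + 6/5 * T 4 3 * x 4)^2 ≤ 0 := by
          linarith [sq_nonneg (x 0 + 1/2 * T 1 0 * x 1), sq_nonneg (x 1 + 4/7 * T 2 1 * x 2), sq_nonneg (x 2 + 7/12 * T 3 2 * x 3), sq_nonneg (x 4 + 5/4 * T 5 4 * x 5), sq_nonneg (x 5 + 4/3 * T 6 5 * x 6), sq_nonneg (x 6 + 3/2 * T 7 6 * x 7), sq_nonneg (x 7)]
        have e3 : x 3 = 0 := by
          have := sq_eq_zero_iff.mp (le_antisymm q3 (sq_nonneg _))
          rw [e4] at this; linarith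
        have q2 : (x 2 + 7/12 * T 3 2 * x 3)^2 ≤ 0 := by
          linarith [sq_nonneg (x 0 + 1/2 * T 1 0 * x 1), sq_nonneg (x 1 + 4/7 * T 2 1 * x 2), sq_nonneg (x 3 + 6/5 * T 4 3 * x 4), sq_nonneg (x 4 + 5/4 * T 5 4 * x 5), sq_nonneg (x 5 + 4/3 * T 6 5 * x 6), sq_nonneg (x 6 + 3/2 * T 7 6 * x 7), sq_nonneg (x 7)]
        have e2 : x 2 = 0 := by
          have := sq_eq_zero_iff.mp (le_antisymm q2 (sq_nonneg _))
          rw [e3] at this; linarith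
        have q1 : (x 1 + 4/7 * T 2 1 * x 2)^2 ≤ 0 := by
          linarith [sq_nonneg (x 0 + 1/2 * T 1 0 * x 1), sq_nonneg (x 2 + 7/12 * T 3 2 * x 3), sq_nonneg (x 3 + 6/5 * T 4 3 * x 4), sq_nonneg (x 4 + 5/4 * T 5 4 * x 5), sq_nonneg (x 5 + 4/3 * T 6 5 * x 6), sq_nonneg (x 6 + 3/2 * T 7 6 * x 7), sq_nonneg (x 7)]
        have e1 : x 1 = 0 := by
          have := sq_eq_zero_iff.mp (le_antisymm q1 (sq_nonneg _))
          rw [e2] at this; linarith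
        have q0 : (x 0 + 1/2 * T 1 0 * x 1)^2 ≤ 0 := by
          linarith [sq_nonneg (x 1 + 4/7 * T 2 1 * x 2), sq_nonneg (x 2 + 7/12 * T 3 2 * x 3), sq_nonneg (x 3 + 6/5 * T 4 3 * x 4), sq_nonneg (x 4 + 5/4 * T 5 4 * x 5), sq_nonneg (x 5 + 4/3 * T 6 5 * x 6), sq_nonneg (x 6 + 3/2 * T 7 6 * x 7), sq_nonneg (x 7)]
        have e0 : x 0 = 0 := by
          have := sq_eq_zero_iff.mp (le_antisymm q0 (sq_nonneg _))
          rw [e1] at this; linarith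
        exact hx (funext fun i => by fin_cases i <;> assumption)
end

section
/- For l ≥ 6, let M be the real symmetric l×l matrix with M i i = 2 for all i, M i j = −1 exactly when {i, j} ∈ {{i, i+1} : 1 ≤ i ≤ l−2} ∪ {{3, l}}, and all other entries 0. Then M is positive definite if and only if l ≤ 8. -/
/-- The coefficient vector: highest-root marks of `E₈` on vertices `0,…,7`
together with `3` on the branch vertex `l-1`. -/
def vE (l : ℕ) : Fin l → ℝ := fun i =>
  if i.val = 0 then 2 else if i.val = 1 then 4 else if i.val = 2 then 6
  else if i.val = 3 then 5 else if i.val = 4 then 4 else if i.val = 5 then 3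
  else if i.val = 6 then 2 else if i.val = 7 then 1 else if i.val = l - 1 then 3 else 0

lemma sum4 {l : ℕ} (f : Fin l → ℝ) (a b c d : Fin l)
    (hab : a ≠ b) (hac : a ≠ c) (had : a ≠ d) (hbc : b ≠ c) (hbd : b ≠ d) (hcd : c ≠ d)
    (h0 : ∀ j, j ≠ a → j ≠ b → j ≠ c → j ≠ d → f j = 0) :
    ∑ j, f j = f a + f b + f c + f d := by
  have h1 : ∑ j, f j = ∑ j ∈ ({a, b, c, d} : Finset (Fin l)), f j := by
    refine (Finset.sum_subset (Finset.subset_univ _) ?_).symm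
    intro x _ hx
    simp only [Finset.mem_insert, Finset.mem_singleton, not_or] at hx
    exact h0 x hx.1 hx.2.1 hx.2.2.1 hx.2.2.2
  rw [h1, Finset.sum_insert (by simp [hab, hac, had]),
      Finset.sum_insert (by simp [hbc, hbd]), Finset.sum_pair hcd]
  ring

set_option maxHeartbeats 2000000 in
/-- the E_l symmetrised Cartan matrix (a chain of `l - 1`
vertices with an extra vertex joined to the third one) is positive definite
iff `l ≤ 8`. (Indices here are 0-based: the chain is 0−1−⋯−(l−2) and the
extra vertex `l−1` is joined to vertex 2.) -/
theorem stmt14 {l : ℕ} (hl : 6 ≤ l) (M : Matrix (Fin l) (Fin l) ℝ)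
    (hM : ∀ i j : Fin l, M i j =
      if i = j then 2
      else if (i.val + 1 = j.val ∧ j.val ≤ l - 2) ∨
              (j.val + 1 = i.val ∧ i.val ≤ l - 2) ∨
              (i.val = 2 ∧ j.val = l - 1) ∨
              (j.val = 2 ∧ i.val = l - 1) then -1
      else 0) :
    M.PosDef ↔ l ≤ 8 := by
  have hsym : M.IsHermitian := by
    ext i j
    rw [Matrix.conjTranspose_apply, star_trivial, hM, hM]
    by_cases h : i = j
    · simp [h]
    · rw [if_neg (fun hh => h hh.symm), if_neg h]
      by_cases h2 : (j.val + 1 = i.val ∧ i.val ≤ l - 2) ∨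
              (i.val + 1 = j.val ∧ j.val ≤ l - 2) ∨
              (j.val = 2 ∧ i.val = l - 1) ∨
              (i.val = 2 ∧ j.val = l - 1)
      · rw [if_pos h2, if_pos (by tauto)]
      · rw [if_neg h2, if_neg (by tauto)]
  constructor
  · -- positive definite → l ≤ 8
    intro hpd
    by_contra hle
    push_neg at hle
    rcases eq_or_lt_of_le (show 9 ≤ l by omega) with h9 | h10
    · -- l = 9 : the affine E₈ null vector kills positivity
      subst h9
      have h := hpd.dotProduct_mulVec_pos (x := ![2, 4, 6, 5, 4, 3, 2, 1, 3]) (by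
        intro h
        have := congrFun h 0
        norm_num at this)
      rw [show dotProduct (star ![2,4,6,5,4,3,2,1,3])
            (M.mulVec ![(2:ℝ),4,6,5,4,3,2,1,3]) = 0 by
        simp only [dotProduct, Matrix.mulVec, star_trivial, Fin.sum_univ_succ, hM]
        norm_num [Fin.ext_iff, show ((3:Fin 9):ℕ) = 3 from rfl, show ((4:Fin 9):ℕ) = 4 from rfl,
          show ((5:Fin 9):ℕ) = 5 from rfl, show ((6:Fin 9):ℕ) = 6 from rfl,
          show ((7:Fin 9):ℕ) = 7 from rfl, show ((8:Fin 9):ℕ) = 8 from rfl]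
        simp
        norm_num] at h
      exact lt_irrefl 0 h
    · -- 10 ≤ l
      have h10' : 10 ≤ l := h10
      have hMval1 : ∀ (a : ℕ) (ha : a < l) (j : Fin l), M ⟨a, ha⟩ j =
          if a = j.val then 2
          else if (a + 1 = j.val ∧ j.val ≤ l - 2) ∨ (j.val + 1 = a ∧ a ≤ l - 2) ∨
              (a = 2 ∧ j.val = l - 1) ∨ (j.val = 2 ∧ a = l - 1) then -1 else 0 := by
        intro a ha j
        rw [hM]
        simp only [Fin.ext_iff, Fin.val_mk]
      have hMval2 : ∀ (a b : ℕ) (ha : a < l) (hb : b < l), M ⟨a, ha⟩ ⟨b, hb⟩ =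
          if a = b then 2
          else if (a + 1 = b ∧ b ≤ l - 2) ∨ (b + 1 = a ∧ a ≤ l - 2) ∨
              (a = 2 ∧ b = l - 1) ∨ (b = 2 ∧ a = l - 1) then -1 else 0 := by
        intro a b ha hb
        rw [hM]
        simp only [Fin.ext_iff, Fin.val_mk]
      have hvz : ∀ j : Fin l, 8 ≤ j.val → j.val ≠ l - 1 → vE l j = 0 := by
        intro j h1 h2
        simp only [vE]
        split_ifs <;> first | rfl | (exfalso; omega)
      have hvlast : ∀ (hm : l - 1 < l), vE l ⟨l - 1, hm⟩ = 3 := by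
        intro hm
        show (if l - 1 = 0 then (2:ℝ) else if l - 1 = 1 then 4 else if l - 1 = 2 then 6
          else if l - 1 = 3 then 5 else if l - 1 = 4 then 4 else if l - 1 = 5 then 3
          else if l - 1 = 6 then 2 else if l - 1 = 7 then 1 else if l - 1 = l - 1 then 3
          else 0) = 3
        rw [if_neg (by omega), if_neg (by omega), if_neg (by omega), if_neg (by omega),
            if_neg (by omega), if_neg (by omega), if_neg (by omega), if_neg (by omega),
            if_pos rfl]
      have hv8 : ∀ (hm : (8:ℕ) < l), vE l ⟨8, hm⟩ = 0 := by
        intro hm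
        exact hvz ⟨8, hm⟩ (le_refl 8) (show (8:ℕ) ≠ l - 1 by omega)
      have hvne : vE l ≠ 0 := by
        intro h
        have := congrFun h ⟨0, by omega⟩
        rw [show vE l ⟨0, by omega⟩ = 2 from rfl] at this
        simpa using this
      have hzero : ∀ i : Fin l, vE l i * (M.mulVec (vE l)) i = 0 := by
        intro i
        by_cases e0 : i.val = 0
        · rw [show i = ⟨0, by omega⟩ from Fin.ext e0]
          have hin : (M.mulVec (vE l)) ⟨0, by omega⟩ = 0 := by
            show (∑ j, M ⟨0, by omega⟩ j * vE l j) = 0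
            rw [sum4 (fun j => M ⟨0, by omega⟩ j * vE l j)
                ⟨0, by omega⟩ ⟨1, by omega⟩ ⟨2, by omega⟩ ⟨3, by omega⟩
                (Fin.ne_of_val_ne (show (0 : ℕ) ≠ 1 by omega)) (Fin.ne_of_val_ne (show (0 : ℕ) ≠ 2 by omega))
                (Fin.ne_of_val_ne (show (0 : ℕ) ≠ 3 by omega)) (Fin.ne_of_val_ne (show (1 : ℕ) ≠ 2 by omega))
                (Fin.ne_of_val_ne (show (1 : ℕ) ≠ 3 by omega)) (Fin.ne_of_val_ne (show (2 : ℕ) ≠ 3 by omega)) ?_]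
            · 
              have q0 : M ⟨0, by omega⟩ ⟨0, by omega⟩ * vE l ⟨0, by omega⟩ = (2 : ℝ) * 2 := by
                rw [hMval2, if_pos (by omega)]
                rw [show vE l ⟨0, by omega⟩ = 2 from rfl]
              have q1 : M ⟨0, by omega⟩ ⟨1, by omega⟩ * vE l ⟨1, by omega⟩ = (-1 : ℝ) * 4 := by
                rw [hMval2, if_neg (by omega), if_pos (by omega)]
                rw [show vE l ⟨1, by omega⟩ = 4 from rfl]
              have q2 : M ⟨0, by omega⟩ ⟨2, by omega⟩ * vE l ⟨2, by omega⟩ = (0 : ℝ) * 6 := by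
                rw [hMval2, if_neg (by omega), if_neg (by omega)]
                rw [show vE l ⟨2, by omega⟩ = 6 from rfl]
              have q3 : M ⟨0, by omega⟩ ⟨3, by omega⟩ * vE l ⟨3, by omega⟩ = (0 : ℝ) * 5 := by
                rw [hMval2, if_neg (by omega), if_neg (by omega)]
                rw [show vE l ⟨3, by omega⟩ = 5 from rfl]
              rw [q0, q1, q2, q3]
              norm_num
            · intro j hja hjb hjc hjd
              show M ⟨0, by omega⟩ j * vE l j = 0
              have na : j.val ≠ 0 := fun h => hja (Fin.ext h)
              have nb : j.val ≠ 1 := fun h => hjb (Fin.ext h)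
              have nc : j.val ≠ 2 := fun h => hjc (Fin.ext h)
              have nd : j.val ≠ 3 := fun h => hjd (Fin.ext h)
              by_cases hz : vE l j = 0
              · rw [hz, mul_zero]
              · have hsupp : j.val ≤ 7 ∨ j.val = l - 1 := by
                  by_contra hc
                  push_neg at hc
                  exact hz (hvz j (by omega) hc.2)
                rw [hMval1, if_neg (by omega), if_neg (by omega), zero_mul]
          rw [hin, mul_zero]
        by_cases e1 : i.val = 1
        · rw [show i = ⟨1, by omega⟩ from Fin.ext e1]
          have hin : (M.mulVec (vE l)) ⟨1, by omega⟩ = 0 := by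
            show (∑ j, M ⟨1, by omega⟩ j * vE l j) = 0
            rw [sum4 (fun j => M ⟨1, by omega⟩ j * vE l j)
                ⟨0, by omega⟩ ⟨1, by omega⟩ ⟨2, by omega⟩ ⟨3, by omega⟩
                (Fin.ne_of_val_ne (show (0 : ℕ) ≠ 1 by omega)) (Fin.ne_of_val_ne (show (0 : ℕ) ≠ 2 by omega))
                (Fin.ne_of_val_ne (show (0 : ℕ) ≠ 3 by omega)) (Fin.ne_of_val_ne (show (1 : ℕ) ≠ 2 by omega))
                (Fin.ne_of_val_ne (show (1 : ℕ) ≠ 3 by omega)) (Fin.ne_of_val_ne (show (2 : ℕ) ≠ 3 by omega)) ?_]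
            · 
              have q0 : M ⟨1, by omega⟩ ⟨0, by omega⟩ * vE l ⟨0, by omega⟩ = (-1 : ℝ) * 2 := by
                rw [hMval2, if_neg (by omega), if_pos (by omega)]
                rw [show vE l ⟨0, by omega⟩ = 2 from rfl]
              have q1 : M ⟨1, by omega⟩ ⟨1, by omega⟩ * vE l ⟨1, by omega⟩ = (2 : ℝ) * 4 := by
                rw [hMval2, if_pos (by omega)]
                rw [show vE l ⟨1, by omega⟩ = 4 from rfl]
              have q2 : M ⟨1, by omega⟩ ⟨2, by omega⟩ * vE l ⟨2, by omega⟩ = (-1 : ℝ) * 6 := by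
                rw [hMval2, if_neg (by omega), if_pos (by omega)]
                rw [show vE l ⟨2, by omega⟩ = 6 from rfl]
              have q3 : M ⟨1, by omega⟩ ⟨3, by omega⟩ * vE l ⟨3, by omega⟩ = (0 : ℝ) * 5 := by
                rw [hMval2, if_neg (by omega), if_neg (by omega)]
                rw [show vE l ⟨3, by omega⟩ = 5 from rfl]
              rw [q0, q1, q2, q3]
              norm_num
            · intro j hja hjb hjc hjd
              show M ⟨1, by omega⟩ j * vE l j = 0
              have na : j.val ≠ 0 := fun h => hja (Fin.ext h)
              have nb : j.val ≠ 1 := fun h => hjb (Fin.ext h)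
              have nc : j.val ≠ 2 := fun h => hjc (Fin.ext h)
              have nd : j.val ≠ 3 := fun h => hjd (Fin.ext h)
              by_cases hz : vE l j = 0
              · rw [hz, mul_zero]
              · have hsupp : j.val ≤ 7 ∨ j.val = l - 1 := by
                  by_contra hc
                  push_neg at hc
                  exact hz (hvz j (by omega) hc.2)
                rw [hMval1, if_neg (by omega), if_neg (by omega), zero_mul]
          rw [hin, mul_zero]
        by_cases e2 : i.val = 2
        · rw [show i = ⟨2, by omega⟩ from Fin.ext e2]
          have hin : (M.mulVec (vE l)) ⟨2, by omega⟩ = 0 := by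
            show (∑ j, M ⟨2, by omega⟩ j * vE l j) = 0
            rw [sum4 (fun j => M ⟨2, by omega⟩ j * vE l j)
                ⟨1, by omega⟩ ⟨2, by omega⟩ ⟨3, by omega⟩ ⟨l - 1, by omega⟩
                (Fin.ne_of_val_ne (show (1 : ℕ) ≠ 2 by omega)) (Fin.ne_of_val_ne (show (1 : ℕ) ≠ 3 by omega))
                (Fin.ne_of_val_ne (show (1 : ℕ) ≠ l - 1 by omega)) (Fin.ne_of_val_ne (show (2 : ℕ) ≠ 3 by omega))
                (Fin.ne_of_val_ne (show (2 : ℕ) ≠ l - 1 by omega)) (Fin.ne_of_val_ne (show (3 : ℕ) ≠ l - 1 by omega)) ?_]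
            · 
              have q0 : M ⟨2, by omega⟩ ⟨1, by omega⟩ * vE l ⟨1, by omega⟩ = (-1 : ℝ) * 4 := by
                rw [hMval2, if_neg (by omega), if_pos (by omega)]
                rw [show vE l ⟨1, by omega⟩ = 4 from rfl]
              have q1 : M ⟨2, by omega⟩ ⟨2, by omega⟩ * vE l ⟨2, by omega⟩ = (2 : ℝ) * 6 := by
                rw [hMval2, if_pos (by omega)]
                rw [show vE l ⟨2, by omega⟩ = 6 from rfl]
              have q2 : M ⟨2, by omega⟩ ⟨3, by omega⟩ * vE l ⟨3, by omega⟩ = (-1 : ℝ) * 5 := by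
                rw [hMval2, if_neg (by omega), if_pos (by omega)]
                rw [show vE l ⟨3, by omega⟩ = 5 from rfl]
              have q3 : M ⟨2, by omega⟩ ⟨l - 1, by omega⟩ * vE l ⟨l - 1, by omega⟩ = (-1 : ℝ) * 3 := by
                rw [hMval2, if_neg (by omega), if_pos (by omega)]
                rw [hvlast]
              rw [q0, q1, q2, q3]
              norm_num
            · intro j hja hjb hjc hjd
              show M ⟨2, by omega⟩ j * vE l j = 0
              have na : j.val ≠ 1 := fun h => hja (Fin.ext h)
              have nb : j.val ≠ 2 := fun h => hjb (Fin.ext h)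
              have nc : j.val ≠ 3 := fun h => hjc (Fin.ext h)
              have nd : j.val ≠ l - 1 := fun h => hjd (Fin.ext h)
              by_cases hz : vE l j = 0
              · rw [hz, mul_zero]
              · have hsupp : j.val ≤ 7 ∨ j.val = l - 1 := by
                  by_contra hc
                  push_neg at hc
                  exact hz (hvz j (by omega) hc.2)
                rw [hMval1, if_neg (by omega), if_neg (by omega), zero_mul]
          rw [hin, mul_zero]
        by_cases e3 : i.val = 3
        · rw [show i = ⟨3, by omega⟩ from Fin.ext e3]
          have hin : (M.mulVec (vE l)) ⟨3, by omega⟩ = 0 := by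
            show (∑ j, M ⟨3, by omega⟩ j * vE l j) = 0
            rw [sum4 (fun j => M ⟨3, by omega⟩ j * vE l j)
                ⟨2, by omega⟩ ⟨3, by omega⟩ ⟨4, by omega⟩ ⟨5, by omega⟩
                (Fin.ne_of_val_ne (show (2 : ℕ) ≠ 3 by omega)) (Fin.ne_of_val_ne (show (2 : ℕ) ≠ 4 by omega))
                (Fin.ne_of_val_ne (show (2 : ℕ) ≠ 5 by omega)) (Fin.ne_of_val_ne (show (3 : ℕ) ≠ 4 by omega))
                (Fin.ne_of_val_ne (show (3 : ℕ) ≠ 5 by omega)) (Fin.ne_of_val_ne (show (4 : ℕ) ≠ 5 by omega)) ?_]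
            · 
              have q0 : M ⟨3, by omega⟩ ⟨2, by omega⟩ * vE l ⟨2, by omega⟩ = (-1 : ℝ) * 6 := by
                rw [hMval2, if_neg (by omega), if_pos (by omega)]
                rw [show vE l ⟨2, by omega⟩ = 6 from rfl]
              have q1 : M ⟨3, by omega⟩ ⟨3, by omega⟩ * vE l ⟨3, by omega⟩ = (2 : ℝ) * 5 := by
                rw [hMval2, if_pos (by omega)]
                rw [show vE l ⟨3, by omega⟩ = 5 from rfl]
              have q2 : M ⟨3, by omega⟩ ⟨4, by omega⟩ * vE l ⟨4, by omega⟩ = (-1 : ℝ) * 4 := by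
                rw [hMval2, if_neg (by omega), if_pos (by omega)]
                rw [show vE l ⟨4, by omega⟩ = 4 from rfl]
              have q3 : M ⟨3, by omega⟩ ⟨5, by omega⟩ * vE l ⟨5, by omega⟩ = (0 : ℝ) * 3 := by
                rw [hMval2, if_neg (by omega), if_neg (by omega)]
                rw [show vE l ⟨5, by omega⟩ = 3 from rfl]
              rw [q0, q1, q2, q3]
              norm_num
            · intro j hja hjb hjc hjd
              show M ⟨3, by omega⟩ j * vE l j = 0
              have na : j.val ≠ 2 := fun h => hja (Fin.ext h)
              have nb : j.val ≠ 3 := fun h => hjb (Fin.ext h)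
              have nc : j.val ≠ 4 := fun h => hjc (Fin.ext h)
              have nd : j.val ≠ 5 := fun h => hjd (Fin.ext h)
              by_cases hz : vE l j = 0
              · rw [hz, mul_zero]
              · have hsupp : j.val ≤ 7 ∨ j.val = l - 1 := by
                  by_contra hc
                  push_neg at hc
                  exact hz (hvz j (by omega) hc.2)
                rw [hMval1, if_neg (by omega), if_neg (by omega), zero_mul]
          rw [hin, mul_zero]
        by_cases e4 : i.val = 4
        · rw [show i = ⟨4, by omega⟩ from Fin.ext e4]
          have hin : (M.mulVec (vE l)) ⟨4, by omega⟩ = 0 := by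
            show (∑ j, M ⟨4, by omega⟩ j * vE l j) = 0
            rw [sum4 (fun j => M ⟨4, by omega⟩ j * vE l j)
                ⟨3, by omega⟩ ⟨4, by omega⟩ ⟨5, by omega⟩ ⟨6, by omega⟩
                (Fin.ne_of_val_ne (show (3 : ℕ) ≠ 4 by omega)) (Fin.ne_of_val_ne (show (3 : ℕ) ≠ 5 by omega))
                (Fin.ne_of_val_ne (show (3 : ℕ) ≠ 6 by omega)) (Fin.ne_of_val_ne (show (4 : ℕ) ≠ 5 by omega))
                (Fin.ne_of_val_ne (show (4 : ℕ) ≠ 6 by omega)) (Fin.ne_of_val_ne (show (5 : ℕ) ≠ 6 by omega)) ?_]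
            · 
              have q0 : M ⟨4, by omega⟩ ⟨3, by omega⟩ * vE l ⟨3, by omega⟩ = (-1 : ℝ) * 5 := by
                rw [hMval2, if_neg (by omega), if_pos (by omega)]
                rw [show vE l ⟨3, by omega⟩ = 5 from rfl]
              have q1 : M ⟨4, by omega⟩ ⟨4, by omega⟩ * vE l ⟨4, by omega⟩ = (2 : ℝ) * 4 := by
                rw [hMval2, if_pos (by omega)]
                rw [show vE l ⟨4, by omega⟩ = 4 from rfl]
              have q2 : M ⟨4, by omega⟩ ⟨5, by omega⟩ * vE l ⟨5, by omega⟩ = (-1 : ℝ) * 3 := by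
                rw [hMval2, if_neg (by omega), if_pos (by omega)]
                rw [show vE l ⟨5, by omega⟩ = 3 from rfl]
              have q3 : M ⟨4, by omega⟩ ⟨6, by omega⟩ * vE l ⟨6, by omega⟩ = (0 : ℝ) * 2 := by
                rw [hMval2, if_neg (by omega), if_neg (by omega)]
                rw [show vE l ⟨6, by omega⟩ = 2 from rfl]
              rw [q0, q1, q2, q3]
              norm_num
            · intro j hja hjb hjc hjd
              show M ⟨4, by omega⟩ j * vE l j = 0
              have na : j.val ≠ 3 := fun h => hja (Fin.ext h)
              have nb : j.val ≠ 4 := fun h => hjb (Fin.ext h)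
              have nc : j.val ≠ 5 := fun h => hjc (Fin.ext h)
              have nd : j.val ≠ 6 := fun h => hjd (Fin.ext h)
              by_cases hz : vE l j = 0
              · rw [hz, mul_zero]
              · have hsupp : j.val ≤ 7 ∨ j.val = l - 1 := by
                  by_contra hc
                  push_neg at hc
                  exact hz (hvz j (by omega) hc.2)
                rw [hMval1, if_neg (by omega), if_neg (by omega), zero_mul]
          rw [hin, mul_zero]
        by_cases e5 : i.val = 5
        · rw [show i = ⟨5, by omega⟩ from Fin.ext e5]
          have hin : (M.mulVec (vE l)) ⟨5, by omega⟩ = 0 := by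
            show (∑ j, M ⟨5, by omega⟩ j * vE l j) = 0
            rw [sum4 (fun j => M ⟨5, by omega⟩ j * vE l j)
                ⟨4, by omega⟩ ⟨5, by omega⟩ ⟨6, by omega⟩ ⟨7, by omega⟩
                (Fin.ne_of_val_ne (show (4 : ℕ) ≠ 5 by omega)) (Fin.ne_of_val_ne (show (4 : ℕ) ≠ 6 by omega))
                (Fin.ne_of_val_ne (show (4 : ℕ) ≠ 7 by omega)) (Fin.ne_of_val_ne (show (5 : ℕ) ≠ 6 by omega))
                (Fin.ne_of_val_ne (show (5 : ℕ) ≠ 7 by omega)) (Fin.ne_of_val_ne (show (6 : ℕ) ≠ 7 by omega)) ?_]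
            · 
              have q0 : M ⟨5, by omega⟩ ⟨4, by omega⟩ * vE l ⟨4, by omega⟩ = (-1 : ℝ) * 4 := by
                rw [hMval2, if_neg (by omega), if_pos (by omega)]
                rw [show vE l ⟨4, by omega⟩ = 4 from rfl]
              have q1 : M ⟨5, by omega⟩ ⟨5, by omega⟩ * vE l ⟨5, by omega⟩ = (2 : ℝ) * 3 := by
                rw [hMval2, if_pos (by omega)]
                rw [show vE l ⟨5, by omega⟩ = 3 from rfl]
              have q2 : M ⟨5, by omega⟩ ⟨6, by omega⟩ * vE l ⟨6, by omega⟩ = (-1 : ℝ) * 2 := by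
                rw [hMval2, if_neg (by omega), if_pos (by omega)]
                rw [show vE l ⟨6, by omega⟩ = 2 from rfl]
              have q3 : M ⟨5, by omega⟩ ⟨7, by omega⟩ * vE l ⟨7, by omega⟩ = (0 : ℝ) * 1 := by
                rw [hMval2, if_neg (by omega), if_neg (by omega)]
                rw [show vE l ⟨7, by omega⟩ = 1 from rfl]
              rw [q0, q1, q2, q3]
              norm_num
            · intro j hja hjb hjc hjd
              show M ⟨5, by omega⟩ j * vE l j = 0
              have na : j.val ≠ 4 := fun h => hja (Fin.ext h)
              have nb : j.val ≠ 5 := fun h => hjb (Fin.ext h)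
              have nc : j.val ≠ 6 := fun h => hjc (Fin.ext h)
              have nd : j.val ≠ 7 := fun h => hjd (Fin.ext h)
              by_cases hz : vE l j = 0
              · rw [hz, mul_zero]
              · have hsupp : j.val ≤ 7 ∨ j.val = l - 1 := by
                  by_contra hc
                  push_neg at hc
                  exact hz (hvz j (by omega) hc.2)
                rw [hMval1, if_neg (by omega), if_neg (by omega), zero_mul]
          rw [hin, mul_zero]
        by_cases e6 : i.val = 6
        · rw [show i = ⟨6, by omega⟩ from Fin.ext e6]
          have hin : (M.mulVec (vE l)) ⟨6, by omega⟩ = 0 := by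
            show (∑ j, M ⟨6, by omega⟩ j * vE l j) = 0
            rw [sum4 (fun j => M ⟨6, by omega⟩ j * vE l j)
                ⟨5, by omega⟩ ⟨6, by omega⟩ ⟨7, by omega⟩ ⟨8, by omega⟩
                (Fin.ne_of_val_ne (show (5 : ℕ) ≠ 6 by omega)) (Fin.ne_of_val_ne (show (5 : ℕ) ≠ 7 by omega))
                (Fin.ne_of_val_ne (show (5 : ℕ) ≠ 8 by omega)) (Fin.ne_of_val_ne (show (6 : ℕ) ≠ 7 by omega))
                (Fin.ne_of_val_ne (show (6 : ℕ) ≠ 8 by omega)) (Fin.ne_of_val_ne (show (7 : ℕ) ≠ 8 by omega)) ?_]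
            · 
              have q0 : M ⟨6, by omega⟩ ⟨5, by omega⟩ * vE l ⟨5, by omega⟩ = (-1 : ℝ) * 3 := by
                rw [hMval2, if_neg (by omega), if_pos (by omega)]
                rw [show vE l ⟨5, by omega⟩ = 3 from rfl]
              have q1 : M ⟨6, by omega⟩ ⟨6, by omega⟩ * vE l ⟨6, by omega⟩ = (2 : ℝ) * 2 := by
                rw [hMval2, if_pos (by omega)]
                rw [show vE l ⟨6, by omega⟩ = 2 from rfl]
              have q2 : M ⟨6, by omega⟩ ⟨7, by omega⟩ * vE l ⟨7, by omega⟩ = (-1 : ℝ) * 1 := by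
                rw [hMval2, if_neg (by omega), if_pos (by omega)]
                rw [show vE l ⟨7, by omega⟩ = 1 from rfl]
              have q3 : M ⟨6, by omega⟩ ⟨8, by omega⟩ * vE l ⟨8, by omega⟩ = (0 : ℝ) * 0 := by
                rw [hMval2, if_neg (by omega), if_neg (by omega)]
                rw [hv8]
              rw [q0, q1, q2, q3]
              norm_num
            · intro j hja hjb hjc hjd
              show M ⟨6, by omega⟩ j * vE l j = 0
              have na : j.val ≠ 5 := fun h => hja (Fin.ext h)
              have nb : j.val ≠ 6 := fun h => hjb (Fin.ext h)
              have nc : j.val ≠ 7 := fun h => hjc (Fin.ext h)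
              have nd : j.val ≠ 8 := fun h => hjd (Fin.ext h)
              by_cases hz : vE l j = 0
              · rw [hz, mul_zero]
              · have hsupp : j.val ≤ 7 ∨ j.val = l - 1 := by
                  by_contra hc
                  push_neg at hc
                  exact hz (hvz j (by omega) hc.2)
                rw [hMval1, if_neg (by omega), if_neg (by omega), zero_mul]
          rw [hin, mul_zero]
        by_cases e7 : i.val = 7
        · rw [show i = ⟨7, by omega⟩ from Fin.ext e7]
          have hin : (M.mulVec (vE l)) ⟨7, by omega⟩ = 0 := by
            show (∑ j, M ⟨7, by omega⟩ j * vE l j) = 0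
            rw [sum4 (fun j => M ⟨7, by omega⟩ j * vE l j)
                ⟨5, by omega⟩ ⟨6, by omega⟩ ⟨7, by omega⟩ ⟨8, by omega⟩
                (Fin.ne_of_val_ne (show (5 : ℕ) ≠ 6 by omega)) (Fin.ne_of_val_ne (show (5 : ℕ) ≠ 7 by omega))
                (Fin.ne_of_val_ne (show (5 : ℕ) ≠ 8 by omega)) (Fin.ne_of_val_ne (show (6 : ℕ) ≠ 7 by omega))
                (Fin.ne_of_val_ne (show (6 : ℕ) ≠ 8 by omega)) (Fin.ne_of_val_ne (show (7 : ℕ) ≠ 8 by omega)) ?_]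
            · 
              have q0 : M ⟨7, by omega⟩ ⟨5, by omega⟩ * vE l ⟨5, by omega⟩ = (0 : ℝ) * 3 := by
                rw [hMval2, if_neg (by omega), if_neg (by omega)]
                rw [show vE l ⟨5, by omega⟩ = 3 from rfl]
              have q1 : M ⟨7, by omega⟩ ⟨6, by omega⟩ * vE l ⟨6, by omega⟩ = (-1 : ℝ) * 2 := by
                rw [hMval2, if_neg (by omega), if_pos (by omega)]
                rw [show vE l ⟨6, by omega⟩ = 2 from rfl]
              have q2 : M ⟨7, by omega⟩ ⟨7, by omega⟩ * vE l ⟨7, by omega⟩ = (2 : ℝ) * 1 := by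
                rw [hMval2, if_pos (by omega)]
                rw [show vE l ⟨7, by omega⟩ = 1 from rfl]
              have q3 : M ⟨7, by omega⟩ ⟨8, by omega⟩ * vE l ⟨8, by omega⟩ = (-1 : ℝ) * 0 := by
                rw [hMval2, if_neg (by omega), if_pos (by omega)]
                rw [hv8]
              rw [q0, q1, q2, q3]
              norm_num
            · intro j hja hjb hjc hjd
              show M ⟨7, by omega⟩ j * vE l j = 0
              have na : j.val ≠ 5 := fun h => hja (Fin.ext h)
              have nb : j.val ≠ 6 := fun h => hjb (Fin.ext h)
              have nc : j.val ≠ 7 := fun h => hjc (Fin.ext h)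
              have nd : j.val ≠ 8 := fun h => hjd (Fin.ext h)
              by_cases hz : vE l j = 0
              · rw [hz, mul_zero]
              · have hsupp : j.val ≤ 7 ∨ j.val = l - 1 := by
                  by_contra hc
                  push_neg at hc
                  exact hz (hvz j (by omega) hc.2)
                rw [hMval1, if_neg (by omega), if_neg (by omega), zero_mul]
          rw [hin, mul_zero]
        by_cases e8 : i.val = l - 1
        · rw [show i = ⟨l - 1, by omega⟩ from Fin.ext e8]
          have hin : (M.mulVec (vE l)) ⟨l - 1, by omega⟩ = 0 := by
            show (∑ j, M ⟨l - 1, by omega⟩ j * vE l j) = 0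
            rw [sum4 (fun j => M ⟨l - 1, by omega⟩ j * vE l j)
                ⟨0, by omega⟩ ⟨1, by omega⟩ ⟨2, by omega⟩ ⟨l - 1, by omega⟩
                (Fin.ne_of_val_ne (show (0 : ℕ) ≠ 1 by omega)) (Fin.ne_of_val_ne (show (0 : ℕ) ≠ 2 by omega))
                (Fin.ne_of_val_ne (show (0 : ℕ) ≠ l - 1 by omega)) (Fin.ne_of_val_ne (show (1 : ℕ) ≠ 2 by omega))
                (Fin.ne_of_val_ne (show (1 : ℕ) ≠ l - 1 by omega)) (Fin.ne_of_val_ne (show (2 : ℕ) ≠ l - 1 by omega)) ?_]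
            · 
              have q0 : M ⟨l - 1, by omega⟩ ⟨0, by omega⟩ * vE l ⟨0, by omega⟩ = (0 : ℝ) * 2 := by
                rw [hMval2, if_neg (by omega), if_neg (by omega)]
                rw [show vE l ⟨0, by omega⟩ = 2 from rfl]
              have q1 : M ⟨l - 1, by omega⟩ ⟨1, by omega⟩ * vE l ⟨1, by omega⟩ = (0 : ℝ) * 4 := by
                rw [hMval2, if_neg (by omega), if_neg (by omega)]
                rw [show vE l ⟨1, by omega⟩ = 4 from rfl]
              have q2 : M ⟨l - 1, by omega⟩ ⟨2, by omega⟩ * vE l ⟨2, by omega⟩ = (-1 : ℝ) * 6 := by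
                rw [hMval2, if_neg (by omega), if_pos (by omega)]
                rw [show vE l ⟨2, by omega⟩ = 6 from rfl]
              have q3 : M ⟨l - 1, by omega⟩ ⟨l - 1, by omega⟩ * vE l ⟨l - 1, by omega⟩ = (2 : ℝ) * 3 := by
                rw [hMval2, if_pos (by omega)]
                rw [hvlast]
              rw [q0, q1, q2, q3]
              norm_num
            · intro j hja hjb hjc hjd
              show M ⟨l - 1, by omega⟩ j * vE l j = 0
              have na : j.val ≠ 0 := fun h => hja (Fin.ext h)
              have nb : j.val ≠ 1 := fun h => hjb (Fin.ext h)
              have nc : j.val ≠ 2 := fun h => hjc (Fin.ext h)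
              have nd : j.val ≠ l - 1 := fun h => hjd (Fin.ext h)
              by_cases hz : vE l j = 0
              · rw [hz, mul_zero]
              · have hsupp : j.val ≤ 7 ∨ j.val = l - 1 := by
                  by_contra hc
                  push_neg at hc
                  exact hz (hvz j (by omega) hc.2)
                rw [hMval1, if_neg (by omega), if_neg (by omega), zero_mul]
          rw [hin, mul_zero]
        · rw [hvz i (by omega) e8, zero_mul]
      have hQ : dotProduct (star (vE l)) (M.mulVec (vE l)) = 0 := by
        simp only [dotProduct, star_trivial]
        exact Finset.sum_eq_zero (fun i _ => hzero i)
      have h := hpd.dotProduct_mulVec_pos (x := vE l) hvne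
      rw [hQ] at h
      exact lt_irrefl 0 h
  · -- l ≤ 8 → positive definite
    intro h8
    interval_cases l
    · -- l = 6
      refine Matrix.PosDef.of_dotProduct_mulVec_pos hsym (fun x hx => ?_)
      have hq : dotProduct (star x) (M.mulVec x) = 2*(x 0)^2 + 2*(x 1)^2 + 2*(x 2)^2 + 2*(x 3)^2 + 2*(x 4)^2 + 2*(x 5)^2 - 2*(x 0 * x 1) - 2*(x 1 * x 2) - 2*(x 2 * x 3) - 2*(x 3 * x 4) - 2*(x 2 * x 5) := by
        simp only [dotProduct, Matrix.mulVec, star_trivial, Fin.sum_univ_six, hM]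
        norm_num [Fin.ext_iff, show ((3:Fin 6):ℕ) = 3 from rfl, show ((4:Fin 6):ℕ) = 4 from rfl, show ((5:Fin 6):ℕ) = 5 from rfl]
        ring
      obtain ⟨i, hi⟩ := Function.ne_iff.mp hx
      have hi' : x i ≠ 0 := by simpa using hi
      have hs : 0 < ∑ j, (x j)^2 :=
        Finset.sum_pos' (fun j _ => sq_nonneg _) ⟨i, Finset.mem_univ i, by positivity⟩
      rw [Fin.sum_univ_six] at hs
      rw [hq]
      nlinarith [sq_nonneg (x 0 - (100/199)*x 1), sq_nonneg (x 1 - (19900/29601)*x 2), sq_nonneg (x 2 - (2960100/3900599)*x 3 - (2960100/3900599)*x 5), sq_nonneg (x 3 - (390059900/480209201)*x 4 - (296010000/480209201)*x 5), sq_nonneg (x 4 - (1000000/1910599)*x 5), sq_nonneg (x 5), hs]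
    · -- l = 7
      refine Matrix.PosDef.of_dotProduct_mulVec_pos hsym (fun x hx => ?_)
      have hq : dotProduct (star x) (M.mulVec x) = 2*(x 0)^2 + 2*(x 1)^2 + 2*(x 2)^2 + 2*(x 3)^2 + 2*(x 4)^2 + 2*(x 5)^2 + 2*(x 6)^2 - 2*(x 0 * x 1) - 2*(x 1 * x 2) - 2*(x 2 * x 3) - 2*(x 3 * x 4) - 2*(x 4 * x 5) - 2*(x 2 * x 6) := by
        simp only [dotProduct, Matrix.mulVec, star_trivial, Fin.sum_univ_seven, hM]
        norm_num [Fin.ext_iff, show ((3:Fin 7):ℕ) = 3 from rfl, show ((4:Fin 7):ℕ) = 4 from rfl, show ((5:Fin 7):ℕ) = 5 from rfl, show ((6:Fin 7):ℕ) = 6 from rfl]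
        ring
      obtain ⟨i, hi⟩ := Function.ne_iff.mp hx
      have hi' : x i ≠ 0 := by simpa using hi
      have hs : 0 < ∑ j, (x j)^2 :=
        Finset.sum_pos' (fun j _ => sq_nonneg _) ⟨i, Finset.mem_univ i, by positivity⟩
      rw [Fin.sum_univ_seven] at hs
      rw [hq]
      nlinarith [sq_nonneg (x 0 - (100/199)*x 1), sq_nonneg (x 1 - (19900/29601)*x 2), sq_nonneg (x 2 - (2960100/3900599)*x 3 - (2960100/3900599)*x 6), sq_nonneg (x 3 - (390059900/480209201)*x 4 - (296010000/480209201)*x 6), sq_nonneg (x 4 - (48020920100/56555640999)*x 5 - (1000000/1910599)*x 6), sq_nonneg (x 5 - (2960100000000/6452480548801)*x 6), sq_nonneg (x 6), hs]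
    · -- l = 8
      refine Matrix.PosDef.of_dotProduct_mulVec_pos hsym (fun x hx => ?_)
      have hq : dotProduct (star x) (M.mulVec x) = 2*(x 0)^2 + 2*(x 1)^2 + 2*(x 2)^2 + 2*(x 3)^2 + 2*(x 4)^2 + 2*(x 5)^2 + 2*(x 6)^2 + 2*(x 7)^2 - 2*(x 0 * x 1) - 2*(x 1 * x 2) - 2*(x 2 * x 3) - 2*(x 3 * x 4) - 2*(x 4 * x 5) - 2*(x 5 * x 6) - 2*(x 2 * x 7) := by
        simp only [dotProduct, Matrix.mulVec, star_trivial, Fin.sum_univ_eight, hM]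
        norm_num [Fin.ext_iff, show ((3:Fin 8):ℕ) = 3 from rfl, show ((4:Fin 8):ℕ) = 4 from rfl, show ((5:Fin 8):ℕ) = 5 from rfl, show ((6:Fin 8):ℕ) = 6 from rfl, show ((7:Fin 8):ℕ) = 7 from rfl]
        ring
      obtain ⟨i, hi⟩ := Function.ne_iff.mp hx
      have hi' : x i ≠ 0 := by simpa using hi
      have hs : 0 < ∑ j, (x j)^2 :=
        Finset.sum_pos' (fun j _ => sq_nonneg _) ⟨i, Finset.mem_univ i, by positivity⟩
      rw [Fin.sum_univ_eight] at hs
      rw [hq]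
      nlinarith [sq_nonneg (x 0 - (100/199)*x 1), sq_nonneg (x 1 - (19900/29601)*x 2), sq_nonneg (x 2 - (2960100/3900599)*x 3 - (2960100/3900599)*x 7), sq_nonneg (x 3 - (390059900/480209201)*x 4 - (296010000/480209201)*x 7), sq_nonneg (x 4 - (48020920100/56555640999)*x 5 - (1000000/1910599)*x 7), sq_nonneg (x 5 - (5655564099900/6452480548801)*x 6 - (2960100000000/6452480548801)*x 7), sq_nonneg (x 6 - (296010000000000/718487219221399)*x 7), sq_nonneg (x 7), hs]
end

section
/- Let V be a finite-dimensional real inner product space with inner product ⟪·,·⟫, and let α_1, …, α_l be a basis of V such that 2 ⟪α_i, α_j⟫ / ⟪α_i, α_i⟫ is an integer for all i, j. For each i let w_i : V → V be the linear map w_i(v) = v − (2 ⟪α_i, v⟫ / ⟪α_i, α_i⟫) α_i (the orthogonal reflection in the hyperplane perpendicular to α_i). Then the smallest subset R of V that contains α_1, …, α_l and is closed under each of the maps w_1, …, w_l is finite. -/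
open scoped RealInnerProductSpace

/-- given a basis of a finite-dimensional real inner product
space whose Cartan-type ratios are integers, the smallest subset containing the
basis vectors and closed under the associated reflections is finite. -/
theorem stmt18 {V : Type*} [NormedAddCommGroup V] [InnerProductSpace ℝ V]
    [FiniteDimensional ℝ V] {l : ℕ} (b : Module.Basis (Fin l) ℝ V)
    (hint : ∀ i j, ∃ n : ℤ, 2 * ⟪b i, b j⟫ / ⟪b i, b i⟫ = (n : ℝ))
    (w : Fin l → V → V)
    (hw : ∀ i v, w i v = v - (2 * ⟪b i, v⟫ / ⟪b i, b i⟫) • b i) :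
    Set.Finite (⋂₀ {S : Set V | (∀ i, b i ∈ S) ∧ ∀ i, ∀ v ∈ S, w i v ∈ S}) := by
  classical
  set L : Submodule ℤ V := Submodule.span ℤ (Set.range b) with hL
  set C : ℝ := ∑ i, ‖b i‖ with hC
  have hBne : ∀ i : Fin l, ⟪b i, b i⟫ ≠ 0 := fun i =>
    inner_self_ne_zero.mpr (b.ne_zero i)
  -- the candidate superset
  set T : Set V := Metric.closedBall 0 C ∩ (L : Set V) with hT
  -- integrality of the Cartan coefficient on L
  have hcoef : ∀ (i : Fin l), ∀ v ∈ L, ∃ n : ℤ, 2 * ⟪b i, v⟫ / ⟪b i, b i⟫ = (n : ℝ) := by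
    intro i v hv
    induction hv using Submodule.span_induction with
    | mem x hx =>
      obtain ⟨j, rfl⟩ := hx
      exact hint i j
    | zero => exact ⟨0, by simp⟩
    | add x y hx hy ihx ihy =>
      obtain ⟨n, hn⟩ := ihx
      obtain ⟨m, hm⟩ := ihy
      refine ⟨n + m, ?_⟩
      rw [inner_add_right]
      push_cast [← hn, ← hm]
      field_simp
    | smul a x hx ih =>
      obtain ⟨n, hn⟩ := ih
      refine ⟨a * n, ?_⟩
      have : ⟪b i, a • x⟫ = (a : ℝ) * ⟪b i, x⟫ := by
        rw [← Int.cast_smul_eq_zsmul ℝ a x, real_inner_smul_right]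
      rw [this]
      push_cast [← hn]
      field_simp
  -- T is closed under the reflections
  have hTclosed : ∀ i, ∀ v ∈ T, w i v ∈ T := by
    intro i v hvT
    obtain ⟨hball, hvL⟩ := hvT
    obtain ⟨n, hn⟩ := hcoef i v hvL
    constructor
    · -- norm is preserved
      have hnorm : ‖w i v‖ = ‖v‖ := by
        have h2 : ‖w i v‖ ^ 2 = ‖v‖ ^ 2 := by
          have hb2 : ‖b i‖ ^ 2 = ⟪b i, b i⟫ := (real_inner_self_eq_norm_sq (b i)).symm
          have hv' : ⟪v, b i⟫ = ⟪b i, v⟫ := real_inner_comm (b i) v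
          rw [hw, norm_sub_sq_real, real_inner_smul_right, norm_smul, mul_pow,
            Real.norm_eq_abs, sq_abs, hb2, hv']
          have hB := hBne i
          field_simp
          ring
        calc ‖w i v‖ = Real.sqrt (‖w i v‖ ^ 2) := (Real.sqrt_sq (norm_nonneg _)).symm
          _ = Real.sqrt (‖v‖ ^ 2) := by rw [h2]
          _ = ‖v‖ := Real.sqrt_sq (norm_nonneg _)
      simp only [Metric.mem_closedBall, dist_zero_right] at hball ⊢
      rw [hnorm]; exact hball
    · -- stays in the lattice
      rw [hw, hn, Int.cast_smul_eq_zsmul ℝ n (b i)]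
      exact Submodule.sub_mem L hvL (Submodule.smul_mem L n
        (Submodule.subset_span ⟨i, rfl⟩))
  -- T contains the basis vectors
  have hTbase : ∀ i, b i ∈ T := by
    intro i
    constructor
    · simp only [Metric.mem_closedBall, dist_zero_right, hC]
      exact Finset.single_le_sum (fun j _ => norm_nonneg (b j)) (Finset.mem_univ i)
    · exact Submodule.subset_span ⟨i, rfl⟩
  -- T is finite
  have hTfin : T.Finite := by
    have : DiscreteTopology (L : Set V) := by
      exact inferInstanceAs (DiscreteTopology (Submodule.span ℤ (Set.range ⇑b)))
    exact Metric.finite_isBounded_inter_isClosed DiscreteTopology.isDiscrete Metric.isBounded_closedBall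
      (AddSubgroup.isClosed_of_discrete (H := L.toAddSubgroup))
  exact hTfin.subset (Set.sInter_subset_of_mem ⟨hTbase, hTclosed⟩)
end
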